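/- arXiv:2604.26882 — 13 statements merged into one kernel-verified Lean document; each statement's English description precedes it below -/
import Mathlib

section
/- Let n ≥ 1, V = Fin (n+1), A = Fin n, and let Γ : Matrix V A ℝ be the incidence matrix of the directed path 0 → 1 → ⋯ → n, i.e. Γ v a = 1 if v = a.castSucc, Γ v a = -1 if v = a.succ, and Γ v a = 0 otherwise; let s = 0 and t = Fin.last n. Then for every μ : A → ℝ with μ a > 0 for all a, the effective resistance satisfies R μ = ENNReal.ofReal (∑ a, 1 / (μ a) ^ r). (Lemma 1(a), equality case: if G is a path, its effective resistance equals the sum of the arc resistances 1/μ_a^r.) -/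
open scoped ENNReal

/-- The effective resistance between `s` and `t` (encoded in the balance vector `b`)
in the network with conductances `y`, for the potential-based flow parameter `r`. -/
noncomputable def effRes {V A : Type*} [Fintype V] [Fintype A]
    (r : ℝ) (Γ : Matrix V A ℝ) (b : V → ℝ) (y : A → ℝ) : ℝ≥0∞ :=
  ⨅ (f : A → ℝ) (_ : Γ.mulVec f = b),
    ∑ a, ENNReal.ofReal (|f a| ^ (r + 1)) / ENNReal.ofReal ((y a) ^ r)

theorem effRes_path_eq_sum_inv_rpow
    (r : ℝ) (hr : 1 ≤ r) (n : ℕ) (hn : 1 ≤ n)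
    (Γ : Matrix (Fin (n + 1)) (Fin n) ℝ)
    (hΓ : ∀ (v : Fin (n + 1)) (a : Fin n),
      Γ v a = if v = a.castSucc then 1 else if v = a.succ then -1 else 0)
    (b : Fin (n + 1) → ℝ)
    (hb : ∀ v, b v = if v = 0 then 1 else if v = Fin.last n then -1 else 0)
    (μ : Fin n → ℝ) (hμ : ∀ a, 0 < μ a) :
    effRes r Γ b μ = ENNReal.ofReal (∑ a, 1 / (μ a) ^ r) := by
  -- decomposition of the matrix-vector product
  have hmul : ∀ (f : Fin n → ℝ) (v : Fin (n + 1)), Γ.mulVec f v =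
      (∑ a, if v = a.castSucc then f a else 0)
        - (∑ a, if v = a.succ then f a else 0) := by
    intro f v
    rw [Matrix.mulVec, dotProduct, ← Finset.sum_sub_distrib]
    apply Finset.sum_congr rfl
    intro a _
    rw [hΓ]
    have hne : (a.castSucc : Fin (n+1)) ≠ a.succ := (Fin.castSucc_lt_succ (i := a)).ne
    by_cases h1 : v = a.castSucc
    · have h2 : v ≠ a.succ := h1 ▸ hne
      rw [if_pos h1, if_pos h1, if_neg h2, one_mul, sub_zero]
    · rw [if_neg h1, if_neg h1]
      by_cases h2 : v = a.succ
      · rw [if_pos h2, if_pos h2]; ring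
      · rw [if_neg h2, if_neg h2]; ring
  -- sums of indicators
  have hc : ∀ (g : Fin n → ℝ) (j : Fin n),
      (∑ a, if (j.castSucc : Fin (n+1)) = a.castSucc then g a else 0) = g j := by
    intro g j
    simp [Fin.castSucc_inj]
  have hcl : ∀ (g : Fin n → ℝ),
      (∑ a, if (Fin.last n : Fin (n+1)) = a.castSucc then g a else 0) = 0 := by
    intro g
    apply Finset.sum_eq_zero
    intro a _
    simp [(Fin.castSucc_lt_last a).ne']
  have hs : ∀ (g : Fin n → ℝ) (j : Fin n),
      (∑ a, if (j.succ : Fin (n+1)) = a.succ then g a else 0) = g j := by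
    intro g j
    simp [Fin.succ_inj]
  have hs0 : ∀ (g : Fin n → ℝ),
      (∑ a, if (0 : Fin (n+1)) = a.succ then g a else 0) = 0 := by
    intro g
    apply Finset.sum_eq_zero
    intro a _
    simp [(Fin.succ_ne_zero a).symm]
  -- the constant-one flow is a valid flow
  have h1 : Γ.mulVec (fun _ => (1:ℝ)) = b := by
    funext v
    rw [hmul, hb]
    induction v using Fin.lastCases with
    | last =>
      have hlast : (Fin.last n : Fin (n+1)) = (⟨n-1, Nat.sub_lt (by omega) one_pos⟩ : Fin n).succ := by
        apply Fin.ext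
        simp [Fin.val_last]
        omega
      rw [hcl]
      have hsum := hs (fun _ => (1:ℝ)) ⟨n-1, Nat.sub_lt (by omega) one_pos⟩
      rw [← hlast] at hsum
      rw [hsum]
      have h0 : (Fin.last n : Fin (n+1)) ≠ 0 := by
        intro h
        have := congrArg Fin.val h
        simp [Fin.val_last] at this
        omega
      rw [if_neg h0, if_pos rfl]
      ring
    | cast j =>
      rw [hc]
      by_cases hj : j.val = 0
      · have : (j.castSucc : Fin (n+1)) = 0 := by
          apply Fin.ext; simp [hj]
        rw [this, hs0]
        simp
      · obtain ⟨m, hm⟩ : ∃ m, j.val = m + 1 := ⟨j.val - 1, by omega⟩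
        have hmn : m < n := by have := j.isLt; omega
        have heq : (j.castSucc : Fin (n+1)) = (⟨m, hmn⟩ : Fin n).succ := by
          apply Fin.ext; simp [hm]
        have hsum := hs (fun _ => (1:ℝ)) ⟨m, hmn⟩
        rw [← heq] at hsum
        rw [hsum]
        have h0 : (j.castSucc : Fin (n+1)) ≠ 0 := by
          intro hcon
          have := congrArg Fin.val hcon
          simp [hm] at this
        have hl : (j.castSucc : Fin (n+1)) ≠ Fin.last n := (Fin.castSucc_lt_last j).ne
        rw [if_neg h0, if_neg hl]
        ring
  -- any valid flow is constant one
  have h2 : ∀ f : Fin n → ℝ, Γ.mulVec f = b → ∀ a : Fin n, f a = 1 := by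
    intro f hf
    have step : ∀ k : ℕ, ∀ h : k < n, f ⟨k, h⟩ = 1 := by
      intro k
      induction k with
      | zero =>
        intro h
        have hv := congrFun hf 0
        rw [hmul, hb] at hv
        have e0 : (0 : Fin (n+1)) = (⟨0, h⟩ : Fin n).castSucc := by
          apply Fin.ext; simp
        rw [e0, hc, ← e0, hs0] at hv
        simpa using hv
      | succ k ih =>
        intro h
        have hk : k < n := by omega
        have hv := congrFun hf ((⟨k+1, h⟩ : Fin n).castSucc)
        rw [hmul, hb, hc] at hv
        have heq : ((⟨k+1, h⟩ : Fin n).castSucc : Fin (n+1)) = (⟨k, hk⟩ : Fin n).succ := by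
          apply Fin.ext; simp
        have hsum := hs f ⟨k, hk⟩
        rw [← heq] at hsum
        rw [hsum, ih hk] at hv
        have h0 : ((⟨k+1, h⟩ : Fin n).castSucc : Fin (n+1)) ≠ 0 := by
          intro hcon
          have := congrArg Fin.val hcon
          simp at this
        have hl : ((⟨k+1, h⟩ : Fin n).castSucc : Fin (n+1)) ≠ Fin.last n :=
          (Fin.castSucc_lt_last _).ne
        rw [if_neg h0, if_neg hl] at hv
        linarith
    intro a
    have := step a.val a.isLt
    simpa using this
  -- value of the objective at the constant-one flow
  have hval : (∑ a, ENNReal.ofReal (|(1:ℝ)| ^ (r + 1)) / ENNReal.ofReal ((μ a) ^ r))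
      = ENNReal.ofReal (∑ a, 1 / (μ a) ^ r) := by
    rw [ENNReal.ofReal_sum_of_nonneg (fun a _ => div_nonneg one_pos.le (Real.rpow_pos_of_pos (hμ a) r).le)]
    apply Finset.sum_congr rfl
    intro a _
    rw [ENNReal.ofReal_div_of_pos (Real.rpow_pos_of_pos (hμ a) r)]
    congr 1
    rw [abs_one, Real.one_rpow, ENNReal.ofReal_one]
  unfold effRes
  refine le_antisymm ?_ ?_
  · exact iInf_le_of_le (fun _ => (1:ℝ)) (iInf_le_of_le h1 hval.le)
  · refine le_iInf fun f => le_iInf fun hf => ?_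
    have hf1 : f = fun _ => (1:ℝ) := funext (h2 f hf)
    rw [hf1, ← hval]
end

section
/- Assume Γ is a node–arc incidence matrix. Then for every y : A → ℝ with y a ≥ 0 for all a, the effective resistance satisfies R y ≥ (ENNReal.ofReal (∑ a, y a)) ^ (-r) (ENNReal rpow, so the right-hand side is ∞ when ∑ a, y a = 0). (Lemma 1(b) of the paper: the effective conductance C_{s,t} = (R_{s,t})^{-1/r} is at most the total conductance ∑_{a∈A} y_a.) -/
open scoped ENNReal

theorem effRes_ge_total_conductance_rpow_neg
    {V A : Type*} [Fintype V] [Fintype A] [Nonempty V] [Nonempty A]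
    (r : ℝ) (hr : 1 ≤ r) (Γ : Matrix V A ℝ) (s t : V) (hst : s ≠ t)
    (b : V → ℝ) (hbs : b s = 1) (hbt : b t = -1)
    (hb : ∀ v, v ≠ s → v ≠ t → b v = 0)
    (hΓ : ∀ a : A, ∃ u v : V, u ≠ v ∧ Γ u a = 1 ∧ Γ v a = -1 ∧
      ∀ w, w ≠ u → w ≠ v → Γ w a = 0)
    (y : A → ℝ) (hy : ∀ a, 0 ≤ y a) :
    effRes r Γ b y ≥ (ENNReal.ofReal (∑ a, y a)) ^ (-r) := by
  have hr0 : (0:ℝ) < r := by linarith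
  have hr1 : (0:ℝ) < r + 1 := by linarith
  rw [effRes, ge_iff_le]
  refine le_iInf fun f => le_iInf fun hf => ?_
  -- Step 1 : the total flow is at least 1
  have hΓs : ∀ a, |Γ s a| ≤ 1 := by
    intro a
    obtain ⟨u, v, huv, h1, h2, h0⟩ := hΓ a
    by_cases hsu : s = u
    · rw [hsu, h1]; norm_num
    by_cases hsv : s = v
    · rw [hsv, h2]; norm_num
    · rw [h0 s hsu hsv]; norm_num
  have hsum1 : (1:ℝ) ≤ ∑ a, |f a| := by
    have hbs' : ∑ a, Γ s a * f a = 1 := by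
      have := congrFun hf s
      simpa [Matrix.mulVec, dotProduct, hbs] using this
    calc (1:ℝ) = ∑ a, Γ s a * f a := hbs'.symm
      _ ≤ ∑ a, |f a| := by
          refine Finset.sum_le_sum fun a _ => ?_
          calc Γ s a * f a ≤ |Γ s a * f a| := le_abs_self _
            _ = |Γ s a| * |f a| := abs_mul _ _
            _ ≤ 1 * |f a| := by
                exact mul_le_mul_of_nonneg_right (hΓs a) (abs_nonneg _)
            _ = |f a| := one_mul _
  by_cases hA : ∃ a, y a = 0 ∧ f a ≠ 0
  · -- some arc has zero conductance but nonzero flow : the sum is ∞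
    obtain ⟨a, hy0, hf0⟩ := hA
    have hterm : ENNReal.ofReal (|f a| ^ (r + 1)) / ENNReal.ofReal ((y a) ^ r) = ⊤ := by
      rw [hy0, Real.zero_rpow hr0.ne', ENNReal.ofReal_zero, ENNReal.div_zero]
      simp only [ne_eq, ENNReal.ofReal_eq_zero, not_le]
      exact Real.rpow_pos_of_pos (abs_pos.2 hf0) _
    have : (∑ a, ENNReal.ofReal (|f a| ^ (r + 1)) / ENNReal.ofReal ((y a) ^ r)) = ⊤ :=
      ENNReal.sum_eq_top.2 ⟨a, Finset.mem_univ a, hterm⟩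
    rw [this]; exact le_top
  push_neg at hA
  -- now y a = 0 → f a = 0
  have hT : 0 < ∑ a, y a := by
    obtain ⟨a, hfa⟩ : ∃ a, f a ≠ 0 := by
      by_contra h
      push_neg at h
      simp only [h, abs_zero, Finset.sum_const_zero] at hsum1
      linarith
    have hya : 0 < y a := (hy a).lt_of_ne' (fun h => hfa (hA a h))
    exact Finset.sum_pos' (fun i _ => hy i) ⟨a, Finset.mem_univ a, hya⟩
  set S : ℝ := ∑ a, |f a| ^ (r + 1) / (y a) ^ r with hS
  set T : ℝ := ∑ a, y a with hTdef
  have hSnn : ∀ a, 0 ≤ |f a| ^ (r + 1) / (y a) ^ r := fun a =>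
    div_nonneg (Real.rpow_nonneg (abs_nonneg _) _) (Real.rpow_nonneg (hy a) _)
  have hS0 : 0 ≤ S := Finset.sum_nonneg fun a _ => hSnn a
  -- Hölder inequality
  have hpq : Real.HolderConjugate (r + 1) ((r + 1) / r) := by
    constructor
    · rw [inv_one, inv_div, inv_eq_one_div, ← add_div, add_comm, div_self hr1.ne']
    · linarith
    · positivity
  have hholder : (1:ℝ) ≤ S ^ (1 / (r + 1)) * T ^ (r / (r + 1)) := by
    have key := Real.inner_le_Lp_mul_Lq Finset.univ
      (fun a => |f a| / (y a) ^ (r / (r + 1))) (fun a => (y a) ^ (r / (r + 1))) hpq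
    have h1 : ∀ a : A, (|f a| / (y a) ^ (r / (r + 1))) * ((y a) ^ (r / (r + 1))) = |f a| := by
      intro a
      rcases ((hy a).lt_or_eq) with hya | hya
      · rw [div_mul_cancel₀]
        exact (Real.rpow_pos_of_pos hya _).ne'
      · rw [← hya, hA a hya.symm]
        simp [Real.zero_rpow (by positivity : r / (r+1) ≠ 0)]
    have h2 : ∀ a : A, |(|f a| / (y a) ^ (r / (r + 1)))| ^ (r + 1)
        = |f a| ^ (r + 1) / (y a) ^ r := by
      intro a
      rw [abs_of_nonneg (div_nonneg (abs_nonneg _) (Real.rpow_nonneg (hy a) _)),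
        Real.div_rpow (abs_nonneg _) (Real.rpow_nonneg (hy a) _),
        ← Real.rpow_mul (hy a)]
      congr 1
      field_simp
    have h3 : ∀ a : A, |(y a) ^ (r / (r + 1))| ^ ((r + 1) / r) = y a := by
      intro a
      rw [abs_of_nonneg (Real.rpow_nonneg (hy a) _), ← Real.rpow_mul (hy a)]
      rw [div_mul_div_comm, mul_comm, div_self (by positivity), Real.rpow_one]
    simp only [h1, h2, h3] at key
    have hq : 1 / ((r + 1) / r) = r / (r + 1) := by
      rw [one_div, inv_div]
    rw [hq] at key
    exact le_trans hsum1 key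
  -- raise to the power r+1
  have hmain : (1:ℝ) ≤ S * T ^ r := by
    have := Real.rpow_le_rpow (by norm_num) hholder hr1.le
    rw [Real.one_rpow, Real.mul_rpow (Real.rpow_nonneg hS0 _) (Real.rpow_nonneg hT.le _),
      ← Real.rpow_mul hS0, ← Real.rpow_mul hT.le] at this
    rw [one_div, inv_mul_cancel₀ hr1.ne', Real.rpow_one,
      div_mul_cancel₀ _ hr1.ne'] at this
    exact this
  have hreal : T ^ (-r) ≤ S := by
    rw [Real.rpow_neg hT.le, inv_le_iff_one_le_mul₀ (Real.rpow_pos_of_pos hT _)]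
    linarith [hmain]
  -- translate to ENNReal
  have hsum_eq : (∑ a, ENNReal.ofReal (|f a| ^ (r + 1)) / ENNReal.ofReal ((y a) ^ r))
      = ENNReal.ofReal S := by
    rw [hS, ENNReal.ofReal_sum_of_nonneg (fun a _ => hSnn a)]
    refine Finset.sum_congr rfl fun a _ => ?_
    rcases ((hy a).lt_or_eq) with hya | hya
    · rw [ENNReal.ofReal_div_of_pos (Real.rpow_pos_of_pos hya _)]
    · rw [← hya, hA a hya.symm]
      simp [Real.zero_rpow hr0.ne', Real.zero_rpow hr1.ne']
  rw [hsum_eq, ENNReal.ofReal_rpow_of_pos hT]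
  exact ENNReal.ofReal_le_ofReal hreal
end

section
/- Let A be a nonempty finite type, r ≥ 1 a real number, and μ f : A → ℝ with μ a > 0 for all a and ∑ a, |f a| ≥ 1. Then ∑ a, |f a| ^ (r+1) / (μ a) ^ r ≥ (∑ a, μ a) ^ (-r) (real rpow). (Core inequality in the proof of Lemma 1(b): any flow vector of total absolute value at least 1 has energy at least (∑ μ_a)^{-r}.) -/
theorem energy_ge_total_conductance_rpow_neg
    {A : Type*} [Fintype A] [Nonempty A] (r : ℝ) (hr : 1 ≤ r)
    (μ f : A → ℝ) (hμ : ∀ a, 0 < μ a) (hf : 1 ≤ ∑ a, |f a|) :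
    ∑ a, |f a| ^ (r + 1) / (μ a) ^ r ≥ (∑ a, μ a) ^ (-r) := by
  have hp : (1:ℝ) ≤ r + 1 := by linarith
  have hp0 : (0:ℝ) < r + 1 := by linarith
  have key := Real.inner_le_weight_mul_Lp_of_nonneg Finset.univ hp μ
    (fun a => |f a| / μ a) (fun a => (hμ a).le)
    (fun a => div_nonneg (abs_nonneg _) (hμ a).le)
  have h1 : ∀ a, μ a * (|f a| / μ a) = |f a| := fun a =>
    mul_div_cancel₀ _ (hμ a).ne'
  have h2 : ∀ a, μ a * (|f a| / μ a) ^ (r + 1) = |f a| ^ (r + 1) / μ a ^ r := by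
    intro a
    rw [Real.div_rpow (abs_nonneg _) (hμ a).le, Real.rpow_add (hμ a), Real.rpow_one,
      ← div_div, mul_div_cancel₀ _ (hμ a).ne']
  simp only [h1, h2] at key
  set S := ∑ a, μ a with hS
  set E := ∑ a, |f a| ^ (r + 1) / μ a ^ r with hE
  have hSpos : 0 < S := Finset.sum_pos (fun a _ => hμ a) Finset.univ_nonempty
  have hEnn : 0 ≤ E := Finset.sum_nonneg fun a _ => by have := hμ a; positivity
  have h3 : (1:ℝ) ≤ S ^ (1 - (r+1)⁻¹) * E ^ (r+1)⁻¹ := le_trans hf key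
  have h4 : (1:ℝ) ≤ S ^ r * E := by
    have := Real.rpow_le_rpow (by norm_num) h3 hp0.le
    rw [Real.one_rpow, Real.mul_rpow (Real.rpow_nonneg hSpos.le _)
      (Real.rpow_nonneg hEnn _)] at this
    rw [← Real.rpow_mul hSpos.le, ← Real.rpow_mul hEnn] at this
    rw [show (1 - (r+1)⁻¹) * (r+1) = r by field_simp; ring,
      inv_mul_cancel₀ hp0.ne', Real.rpow_one] at this
    exact this
  have : S ^ (-r) * 1 ≤ S ^ (-r) * (S ^ r * E) := by
    apply mul_le_mul_of_nonneg_left h4 (Real.rpow_nonneg hSpos.le _)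
  rw [mul_one, ← mul_assoc, ← Real.rpow_add hSpos, neg_add_cancel,
    Real.rpow_zero, one_mul] at this
  exact this
end

section
/- Let V have exactly two distinct elements s and t and let Γ : Matrix V A ℝ be given by Γ s a = 1 and Γ t a = -1 for every a : A (all arcs parallel from s to t). Then for every μ : A → ℝ with μ a > 0 for all a, the effective resistance satisfies R μ = ENNReal.ofReal ((∑ a, μ a) ^ (-r)). (Lemma 1(b), equality case: for a parallel network the effective conductance equals ∑_{a∈A} μ_a.) -/
open scoped ENNReal

/-- Lower bound via weighted Hölder. -/
lemma effRes_key {A : Type*} [Fintype A] [Nonempty A]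
    (r : ℝ) (hr : 1 ≤ r) (μ f : A → ℝ) (hμ : ∀ a, 0 < μ a)
    (hf : ∑ a, f a = 1) :
    (∑ a, μ a) ^ (-r) ≤ ∑ a, |f a| ^ (r + 1) / μ a ^ r := by
  set S := ∑ a, μ a with hSdef
  have hS : 0 < S := Finset.sum_pos (fun a _ => hμ a) Finset.univ_nonempty
  set p := r + 1 with hpdef
  have hp : (1 : ℝ) ≤ p := by linarith
  have hppos : (0 : ℝ) < p := by linarith
  have hp0 : p ≠ 0 := ne_of_gt hppos
  set L := ∑ a, |f a| ^ p / μ a ^ r with hLdef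
  have hL0 : 0 ≤ L :=
    Finset.sum_nonneg fun a _ => div_nonneg (Real.rpow_nonneg (abs_nonneg _) _)
      (Real.rpow_nonneg (hμ a).le _)
  have holder := Real.inner_le_weight_mul_Lp_of_nonneg Finset.univ hp μ
      (fun a => |f a| / μ a) (fun a => (hμ a).le)
      (fun a => div_nonneg (abs_nonneg _) (hμ a).le)
  have hLHS : ∑ a, μ a * (|f a| / μ a) = ∑ a, |f a| := by
    refine Finset.sum_congr rfl fun a _ => ?_
    rw [mul_comm, div_mul_cancel₀ _ (hμ a).ne']
  have hRHS : ∑ a, μ a * (|f a| / μ a) ^ p = L := by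
    refine Finset.sum_congr rfl fun a _ => ?_
    rw [Real.div_rpow (abs_nonneg _) (hμ a).le]
    have hμp : μ a ^ p = μ a ^ r * μ a := by
      rw [hpdef, Real.rpow_add (hμ a), Real.rpow_one]
    rw [hμp]
    have h0 := (hμ a).ne'
    have h0' := (Real.rpow_pos_of_pos (hμ a) r).ne'
    field_simp
  rw [hLHS, hRHS] at holder
  have h1 : (1 : ℝ) ≤ ∑ a, |f a| := by
    calc (1:ℝ) = ∑ a, f a := hf.symm
    _ ≤ ∑ a, |f a| := Finset.sum_le_sum fun a _ => le_abs_self _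
  have hc : 0 < S ^ (1 - p⁻¹) := Real.rpow_pos_of_pos hS _
  have h2 : S ^ (p⁻¹ - 1) ≤ L ^ p⁻¹ := by
    have h2' : 1 / S ^ (1 - p⁻¹) ≤ L ^ p⁻¹ := by
      rw [div_le_iff₀ hc, mul_comm]
      linarith
    calc S ^ (p⁻¹ - 1) = 1 / S ^ (1 - p⁻¹) := by
          rw [one_div, ← Real.rpow_neg hS.le]
          congr 1
          ring
      _ ≤ L ^ p⁻¹ := h2'
  calc S ^ (-r) = (S ^ (p⁻¹ - 1)) ^ p := by
        rw [← Real.rpow_mul hS.le]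
        congr 1
        rw [sub_mul, inv_mul_cancel₀ hp0, hpdef]
        ring
    _ ≤ (L ^ p⁻¹) ^ p :=
        Real.rpow_le_rpow (Real.rpow_nonneg hS.le _) h2 hppos.le
    _ = L := by rw [← Real.rpow_mul hL0, inv_mul_cancel₀ hp0, Real.rpow_one]

theorem effRes_parallel_eq
    {V A : Type*} [Fintype V] [Fintype A] [Nonempty V] [Nonempty A]
    (r : ℝ) (hr : 1 ≤ r) (Γ : Matrix V A ℝ) (s t : V) (hst : s ≠ t)
    (hV : ∀ v : V, v = s ∨ v = t)
    (b : V → ℝ) (hbs : b s = 1) (hbt : b t = -1)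
    (hb : ∀ v, v ≠ s → v ≠ t → b v = 0)
    (hΓs : ∀ a : A, Γ s a = 1) (hΓt : ∀ a : A, Γ t a = -1)
    (μ : A → ℝ) (hμ : ∀ a, 0 < μ a) :
    effRes r Γ b μ = ENNReal.ofReal ((∑ a, μ a) ^ (-r)) := by
  set S := ∑ a, μ a with hSdef
  have hS : 0 < S := Finset.sum_pos (fun a _ => hμ a) Finset.univ_nonempty
  have hterm : ∀ f : A → ℝ,
      (∑ a, ENNReal.ofReal (|f a| ^ (r + 1)) / ENNReal.ofReal ((μ a) ^ r))
        = ENNReal.ofReal (∑ a, |f a| ^ (r + 1) / μ a ^ r) := by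
    intro f
    rw [ENNReal.ofReal_sum_of_nonneg (fun a _ =>
      div_nonneg (Real.rpow_nonneg (abs_nonneg _) _) (Real.rpow_nonneg (hμ a).le _))]
    refine Finset.sum_congr rfl fun a _ => ?_
    rw [ENNReal.ofReal_div_of_pos (Real.rpow_pos_of_pos (hμ a) r)]
  have hfeas : ∀ f : A → ℝ, Γ.mulVec f = b ↔ ∑ a, f a = 1 := by
    intro f
    constructor
    · intro h
      have := congrFun h s
      simpa [Matrix.mulVec, dotProduct, hΓs, hbs] using this
    · intro h
      funext v
      rcases hV v with rfl | rfl
      · simpa [Matrix.mulVec, dotProduct, hΓs, hbs] using h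
      · simp only [Matrix.mulVec, dotProduct, hΓt, hbt, neg_one_mul,
          Finset.sum_neg_distrib, h]
  apply le_antisymm
  · -- upper bound: take f = μ / S
    have hfeas' : Γ.mulVec (fun a => μ a / S) = b := by
      rw [hfeas]
      rw [← Finset.sum_div, div_self (ne_of_gt hS)]
    refine le_trans (iInf₂_le (fun a => μ a / S) hfeas') ?_
    rw [hterm]
    apply le_of_eq
    congr 1
    have hkey : ∀ a : A, |μ a / S| ^ (r + 1) / μ a ^ r = μ a / S ^ (r + 1) := by
      intro a
      have h1 : μ a ^ (r + 1) = μ a * μ a ^ r := by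
        rw [Real.rpow_add (hμ a), Real.rpow_one, mul_comm]
      rw [abs_of_pos (div_pos (hμ a) hS), Real.div_rpow (hμ a).le hS.le, h1]
      have hμr := (Real.rpow_pos_of_pos (hμ a) r).ne'
      have hSp := (Real.rpow_pos_of_pos hS (r + 1)).ne'
      field_simp
    rw [Finset.sum_congr rfl fun a _ => hkey a, ← Finset.sum_div, ← hSdef]
    have h2 : S / S ^ (r + 1) = S ^ (1:ℝ) / S ^ (r + 1) := by rw [Real.rpow_one]
    rw [h2, ← Real.rpow_sub hS]
    congr 1
    ring
  · -- lower bound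
    refine le_iInf₂ fun f hf => ?_
    rw [hterm]
    exact ENNReal.ofReal_le_ofReal
      (effRes_key r hr μ f hμ ((hfeas f).mp hf))
end

section
/- For all y y' : A → ℝ with y a ≥ 0 and y' a ≥ 0 for every a, and every λ ∈ [0,1], the effective resistance satisfies R (fun a => λ * y a + (1-λ) * y' a) ≤ ENNReal.ofReal λ * R y + ENNReal.ofReal (1-λ) * R y'. (Lemma 3 of the paper: the effective resistance R^y_{s,t} is convex in the conductance vector y.) -/
open scoped ENNReal

lemma real_key (r : ℝ) (hr : 1 ≤ r) {F G x x' lam : ℝ}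
    (hx : 0 ≤ x) (hx' : 0 ≤ x') (hl0 : 0 ≤ lam) (hl1 : lam ≤ 1)
    (hF0 : x = 0 → F = 0) (hG0 : x' = 0 → G = 0)
    (hS : 0 < lam * x + (1 - lam) * x') :
    |lam * F + (1 - lam) * G| ^ (r + 1) / (lam * x + (1 - lam) * x') ^ r
      ≤ lam * (|F| ^ (r + 1) / x ^ r) + (1 - lam) * (|G| ^ (r + 1) / x' ^ r) := by
  have hr0 : (0:ℝ) ≤ r := by linarith
  have hrp : (0:ℝ) < r + 1 := by linarith
  set S := lam * x + (1 - lam) * x' with hSdef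
  set u := |F| / x with hu_def
  set v := |G| / x' with hv_def
  have hu : 0 ≤ u := div_nonneg (abs_nonneg _) hx
  have hv : 0 ≤ v := div_nonneg (abs_nonneg _) hx'
  have keyF : |F| = x * u := by
    rcases eq_or_lt_of_le hx with h | h
    · simp [hF0 h.symm, ← h]
    · rw [hu_def, mul_div_assoc']; exact (mul_div_cancel_left₀ _ h.ne').symm
  have keyG : |G| = x' * v := by
    rcases eq_or_lt_of_le hx' with h | h
    · simp [hG0 h.symm, ← h]
    · rw [hv_def, mul_div_assoc']; exact (mul_div_cancel_left₀ _ h.ne').symm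
  set μ := lam * x / S with hμ_def
  have hμ0 : 0 ≤ μ := div_nonneg (mul_nonneg hl0 hx) hS.le
  have hμS : S * μ = lam * x := by rw [hμ_def, mul_div_assoc']; exact mul_div_cancel_left₀ _ hS.ne'
  have hμS' : S * (1 - μ) = (1 - lam) * x' := by
    have : S * (1 - μ) = S - S * μ := by ring
    rw [this, hμS]; ring
  have hμ1 : μ ≤ 1 := by
    nlinarith [mul_nonneg (sub_nonneg.2 hl1) hx']
  have step1 : |lam * F + (1 - lam) * G| ≤ S * (μ * u + (1 - μ) * v) := by
    calc |lam * F + (1 - lam) * G| ≤ |lam * F| + |(1 - lam) * G| := abs_add_le _ _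
      _ = lam * |F| + (1 - lam) * |G| := by
          rw [abs_mul, abs_mul, abs_of_nonneg hl0, abs_of_nonneg (by linarith : (0:ℝ) ≤ 1 - lam)]
      _ = lam * x * u + (1 - lam) * x' * v := by rw [keyF, keyG]; ring
      _ = S * (μ * u + (1 - μ) * v) := by rw [mul_add, ← mul_assoc, ← mul_assoc, hμS, hμS']
  set W := μ * u + (1 - μ) * v with hW_def
  have hW : 0 ≤ W := add_nonneg (mul_nonneg hμ0 hu) (mul_nonneg (by linarith) hv)
  have step2 : |lam * F + (1 - lam) * G| ^ (r + 1) ≤ (S * W) ^ (r + 1) :=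
    Real.rpow_le_rpow (abs_nonneg _) step1 hrp.le
  have step3 : (S * W) ^ (r + 1) / S ^ r = S * W ^ (r + 1) := by
    rw [Real.mul_rpow hS.le hW, Real.rpow_add hS r 1, Real.rpow_one]
    field_simp
  have step4 : W ^ (r + 1) ≤ μ * u ^ (r + 1) + (1 - μ) * v ^ (r + 1) :=
    (convexOn_rpow (by linarith : 1 ≤ r + 1)).2 (Set.mem_Ici.2 hu) (Set.mem_Ici.2 hv)
      hμ0 (by linarith) (by ring)
  have termF : x * u ^ (r + 1) = |F| ^ (r + 1) / x ^ r := by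
    rcases eq_or_lt_of_le hx with h | h
    · have hF : F = 0 := hF0 h.symm
      rw [hu_def, hF, ← h]
      simp [Real.zero_rpow hrp.ne']
    · rw [hu_def, Real.div_rpow (abs_nonneg _) hx, Real.rpow_add h r 1, Real.rpow_one]
      field_simp
  have termG : x' * v ^ (r + 1) = |G| ^ (r + 1) / x' ^ r := by
    rcases eq_or_lt_of_le hx' with h | h
    · have hG : G = 0 := hG0 h.symm
      rw [hv_def, hG, ← h]
      simp [Real.zero_rpow hrp.ne']
    · rw [hv_def, Real.div_rpow (abs_nonneg _) hx', Real.rpow_add h r 1, Real.rpow_one]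
      field_simp
  calc |lam * F + (1 - lam) * G| ^ (r + 1) / S ^ r
      ≤ (S * W) ^ (r + 1) / S ^ r := by
        exact (div_le_div_iff_of_pos_right (Real.rpow_pos_of_pos hS r)).2 step2
    _ = S * W ^ (r + 1) := step3
    _ ≤ S * (μ * u ^ (r + 1) + (1 - μ) * v ^ (r + 1)) := by
        exact mul_le_mul_of_nonneg_left step4 hS.le
    _ = lam * x * u ^ (r + 1) + (1 - lam) * x' * v ^ (r + 1) := by
        rw [mul_add, ← mul_assoc, ← mul_assoc, hμS, hμS']
    _ = lam * (|F| ^ (r + 1) / x ^ r) + (1 - lam) * (|G| ^ (r + 1) / x' ^ r) := by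
        rw [mul_assoc, mul_assoc, termF, termG]

lemma term_eq (r : ℝ) (hr : 1 ≤ r) {c x F : ℝ} (hc : 0 ≤ c) (hx : 0 ≤ x)
    (hF : x = 0 → F = 0) :
    ENNReal.ofReal c * (ENNReal.ofReal (|F| ^ (r + 1)) / ENNReal.ofReal (x ^ r))
      = ENNReal.ofReal (c * (|F| ^ (r + 1) / x ^ r)) := by
  have hrp : (0:ℝ) < r + 1 := by linarith
  rcases eq_or_lt_of_le hx with h | h
  · have hF0 : F = 0 := hF h.symm
    rw [hF0, ← h]
    simp [Real.zero_rpow hrp.ne']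
  · rw [ENNReal.ofReal_mul hc, ENNReal.ofReal_div_of_pos (Real.rpow_pos_of_pos h r)]

lemma term_le (r : ℝ) (hr : 1 ≤ r) {F G x x' lam : ℝ}
    (hx : 0 ≤ x) (hx' : 0 ≤ x') (hl0 : 0 < lam) (hl1 : lam < 1) :
    ENNReal.ofReal (|lam * F + (1 - lam) * G| ^ (r + 1)) /
        ENNReal.ofReal ((lam * x + (1 - lam) * x') ^ r)
      ≤ ENNReal.ofReal lam * (ENNReal.ofReal (|F| ^ (r + 1)) / ENNReal.ofReal (x ^ r)) +
        ENNReal.ofReal (1 - lam) *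
          (ENNReal.ofReal (|G| ^ (r + 1)) / ENNReal.ofReal (x' ^ r)) := by
  have hr0 : r ≠ 0 := by linarith
  have hrp : (0:ℝ) < r + 1 := by linarith
  by_cases hc1 : x = 0 ∧ F ≠ 0
  · obtain ⟨hx0, hF⟩ := hc1
    have htop : ENNReal.ofReal lam *
        (ENNReal.ofReal (|F| ^ (r + 1)) / ENNReal.ofReal (x ^ r)) = ⊤ := by
      rw [hx0, Real.zero_rpow hr0, ENNReal.ofReal_zero,
        ENNReal.div_zero (ENNReal.ofReal_pos.2 (Real.rpow_pos_of_pos (abs_pos.2 hF) _)).ne',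
        ENNReal.mul_top (ENNReal.ofReal_pos.2 hl0).ne']
    rw [htop, top_add]
    exact le_top
  by_cases hc2 : x' = 0 ∧ G ≠ 0
  · obtain ⟨hx0, hG⟩ := hc2
    have htop : ENNReal.ofReal (1 - lam) *
        (ENNReal.ofReal (|G| ^ (r + 1)) / ENNReal.ofReal (x' ^ r)) = ⊤ := by
      rw [hx0, Real.zero_rpow hr0, ENNReal.ofReal_zero,
        ENNReal.div_zero (ENNReal.ofReal_pos.2 (Real.rpow_pos_of_pos (abs_pos.2 hG) _)).ne',
        ENNReal.mul_top (ENNReal.ofReal_pos.2 (by linarith)).ne']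
    rw [htop, add_top]
    exact le_top
  · have hF0 : x = 0 → F = 0 := by
      intro h; by_contra h'; exact hc1 ⟨h, h'⟩
    have hG0 : x' = 0 → G = 0 := by
      intro h; by_contra h'; exact hc2 ⟨h, h'⟩
    rw [term_eq r hr hl0.le hx hF0, term_eq r hr (by linarith) hx' hG0,
      ← ENNReal.ofReal_add (mul_nonneg hl0.le (by positivity))
        (mul_nonneg (by linarith) (by positivity))]
    have hSnn : 0 ≤ lam * x + (1 - lam) * x' := by
      have := mul_nonneg hl0.le hx
      have := mul_nonneg (by linarith : (0:ℝ) ≤ 1 - lam) hx'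
      linarith
    rcases eq_or_lt_of_le hSnn with hS | hS
    · have hx0 : x = 0 := by
        nlinarith [mul_nonneg hl0.le hx, mul_nonneg (by linarith : (0:ℝ) ≤ 1 - lam) hx']
      have hx'0 : x' = 0 := by
        nlinarith [mul_nonneg hl0.le hx, mul_nonneg (by linarith : (0:ℝ) ≤ 1 - lam) hx']
      rw [hF0 hx0, hG0 hx'0]
      simp [Real.zero_rpow hrp.ne']
    · rw [← ENNReal.ofReal_div_of_pos (Real.rpow_pos_of_pos hS r)]
      exact ENNReal.ofReal_le_ofReal
        (real_key r hr hx hx' hl0.le hl1.le hF0 hG0 hS)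

theorem effRes_convex
    {V A : Type*} [Fintype V] [Fintype A] [Nonempty V] [Nonempty A]
    (r : ℝ) (hr : 1 ≤ r) (Γ : Matrix V A ℝ) (s t : V) (hst : s ≠ t)
    (b : V → ℝ) (hbs : b s = 1) (hbt : b t = -1)
    (hb : ∀ v, v ≠ s → v ≠ t → b v = 0)
    (y y' : A → ℝ) (hy : ∀ a, 0 ≤ y a) (hy' : ∀ a, 0 ≤ y' a)
    (lam : ℝ) (hlam0 : 0 ≤ lam) (hlam1 : lam ≤ 1) :
    effRes r Γ b (fun a => lam * y a + (1 - lam) * y' a) ≤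
      ENNReal.ofReal lam * effRes r Γ b y +
        ENNReal.ofReal (1 - lam) * effRes r Γ b y' := by
  rcases eq_or_lt_of_le hlam0 with h0 | h0
  · subst h0
    simp only [zero_mul, sub_zero, one_mul, zero_add, ENNReal.ofReal_zero, ENNReal.ofReal_one]
    exact le_rfl
  rcases eq_or_lt_of_le hlam1 with h1 | h1
  · subst h1
    simp only [one_mul, sub_self, zero_mul, add_zero, ENNReal.ofReal_one, ENNReal.ofReal_zero]
    exact le_rfl
  by_cases hRy : effRes r Γ b y = ⊤
  · rw [hRy, ENNReal.mul_top (ENNReal.ofReal_pos.2 h0).ne', top_add]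
    exact le_top
  by_cases hRy' : effRes r Γ b y' = ⊤
  · rw [hRy', ENNReal.mul_top (ENNReal.ofReal_pos.2 (by linarith)).ne', add_top]
    exact le_top
  apply ENNReal.le_of_forall_pos_le_add
  intro ε hε _
  set δ : ℝ≥0∞ := (ε : ℝ≥0∞) / 2 with hδ
  have hδ0 : δ ≠ 0 := by
    simp only [hδ, ne_eq, ENNReal.div_eq_zero_iff, ENNReal.coe_eq_zero, ENNReal.ofNat_ne_top,
      or_false]
    exact_mod_cast hε.ne'
  have h1f : (⨅ (f : A → ℝ) (_ : Γ.mulVec f = b),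
      ∑ a, ENNReal.ofReal (|f a| ^ (r + 1)) / ENNReal.ofReal ((y a) ^ r))
      < effRes r Γ b y + δ := ENNReal.lt_add_right hRy hδ0
  obtain ⟨f, hf⟩ := iInf_lt_iff.mp h1f
  obtain ⟨hfeas, hTf⟩ := iInf_lt_iff.mp hf
  have h1g : (⨅ (g : A → ℝ) (_ : Γ.mulVec g = b),
      ∑ a, ENNReal.ofReal (|g a| ^ (r + 1)) / ENNReal.ofReal ((y' a) ^ r))
      < effRes r Γ b y' + δ := ENNReal.lt_add_right hRy' hδ0
  obtain ⟨g, hg⟩ := iInf_lt_iff.mp h1g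
  obtain ⟨hgeas, hTg⟩ := iInf_lt_iff.mp hg
  have hmix : Γ.mulVec (fun a => lam * f a + (1 - lam) * g a) = b := by
    have hfun : (fun a => lam * f a + (1 - lam) * g a) = lam • f + (1 - lam) • g := by
      funext a; simp [smul_eq_mul]
    rw [hfun, Matrix.mulVec_add, Matrix.mulVec_smul, Matrix.mulVec_smul, hfeas, hgeas,
      ← add_smul]
    simp
  have hle : effRes r Γ b (fun a => lam * y a + (1 - lam) * y' a) ≤
      ∑ a, ENNReal.ofReal (|lam * f a + (1 - lam) * g a| ^ (r + 1)) /
        ENNReal.ofReal ((lam * y a + (1 - lam) * y' a) ^ r) :=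
    iInf₂_le (fun a => lam * f a + (1 - lam) * g a) hmix
  have e1 : ENNReal.ofReal lam * δ ≤ δ := by
    calc ENNReal.ofReal lam * δ ≤ 1 * δ :=
          mul_le_mul_left (ENNReal.ofReal_le_one.2 hlam1) δ
      _ = δ := one_mul δ
  have e2 : ENNReal.ofReal (1 - lam) * δ ≤ δ := by
    calc ENNReal.ofReal (1 - lam) * δ ≤ 1 * δ :=
          mul_le_mul_left (ENNReal.ofReal_le_one.2 (by linarith)) δ
      _ = δ := one_mul δ
  calc effRes r Γ b (fun a => lam * y a + (1 - lam) * y' a)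
      ≤ ∑ a, ENNReal.ofReal (|lam * f a + (1 - lam) * g a| ^ (r + 1)) /
          ENNReal.ofReal ((lam * y a + (1 - lam) * y' a) ^ r) := hle
    _ ≤ ∑ a, (ENNReal.ofReal lam *
            (ENNReal.ofReal (|f a| ^ (r + 1)) / ENNReal.ofReal ((y a) ^ r)) +
          ENNReal.ofReal (1 - lam) *
            (ENNReal.ofReal (|g a| ^ (r + 1)) / ENNReal.ofReal ((y' a) ^ r))) :=
        Finset.sum_le_sum fun a _ => term_le r hr (hy a) (hy' a) h0 h1
    _ = ENNReal.ofReal lam *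
          (∑ a, ENNReal.ofReal (|f a| ^ (r + 1)) / ENNReal.ofReal ((y a) ^ r)) +
        ENNReal.ofReal (1 - lam) *
          (∑ a, ENNReal.ofReal (|g a| ^ (r + 1)) / ENNReal.ofReal ((y' a) ^ r)) := by
        rw [Finset.sum_add_distrib, Finset.mul_sum, Finset.mul_sum]
    _ ≤ ENNReal.ofReal lam * (effRes r Γ b y + δ) +
        ENNReal.ofReal (1 - lam) * (effRes r Γ b y' + δ) :=
        add_le_add (mul_le_mul_right hTf.le _) (mul_le_mul_right hTg.le _)
    _ = (ENNReal.ofReal lam * effRes r Γ b y +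
          ENNReal.ofReal (1 - lam) * effRes r Γ b y') +
        (ENNReal.ofReal lam * δ + ENNReal.ofReal (1 - lam) * δ) := by ring
    _ ≤ (ENNReal.ofReal lam * effRes r Γ b y +
          ENNReal.ofReal (1 - lam) * effRes r Γ b y') + (δ + δ) :=
        add_le_add le_rfl (add_le_add e1 e2)
    _ = (ENNReal.ofReal lam * effRes r Γ b y +
          ENNReal.ofReal (1 - lam) * effRes r Γ b y') + ε := by
        rw [hδ, ENNReal.add_halves]
end

section
/- For every B : ℝ≥0∞, the set {y : A → ℝ | (∀ a, y a ≥ 0) ∧ R y ≤ B} is a convex subset of the real vector space A → ℝ. (Content of Corollary 4: without fixed costs the network design problem has a convex feasible region {y ≥ 0 : R^y_{s,t} ≤ B}, so it admits a convex formulation.) -/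
open scoped ENNReal

/-- Two-point weighted power mean inequality over ℝ. -/
lemma real_mean2 {r : ℝ} (hr : 1 ≤ r) {w₁ w₂ z₁ z₂ : ℝ} (hw₁ : 0 ≤ w₁) (hw₂ : 0 ≤ w₂)
    (hz₁ : 0 ≤ z₁) (hz₂ : 0 ≤ z₂) (hw : w₁ + w₂ = 1) :
    (w₁ * z₁ + w₂ * z₂) ^ (r + 1) ≤ w₁ * z₁ ^ (r + 1) + w₂ * z₂ ^ (r + 1) := by
  have h := Real.rpow_arith_mean_le_arith_mean_rpow Finset.univ ![w₁, w₂] ![z₁, z₂]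
    (by intro i _; fin_cases i <;> assumption)
    (by simp [Fin.sum_univ_succ, hw])
    (by intro i _; fin_cases i <;> assumption)
    (show (1:ℝ) ≤ r + 1 by linarith)
  simpa [Fin.sum_univ_succ] using h

/-- Two-point Radon-type inequality over ℝ (with Lean's division-by-zero convention). -/
lemma real_key_s7 {r θ θ' x₁ x₂ y₁ y₂ : ℝ} (hr : 1 ≤ r)
    (hθ : 0 < θ) (hθ' : 0 < θ')
    (hx₁ : 0 ≤ x₁) (hx₂ : 0 ≤ x₂) (hy₁ : 0 ≤ y₁) (hy₂ : 0 ≤ y₂)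
    (h₁ : y₁ = 0 → x₁ = 0) (h₂ : y₂ = 0 → x₂ = 0)
    (hS : 0 < θ * y₁ + θ' * y₂) :
    (θ * x₁ + θ' * x₂) ^ (r + 1) / (θ * y₁ + θ' * y₂) ^ r
      ≤ θ * (x₁ ^ (r + 1) / y₁ ^ r) + θ' * (x₂ ^ (r + 1) / y₂ ^ r) := by
  have hp : (0:ℝ) < r + 1 := by linarith
  set S := θ * y₁ + θ' * y₂ with hSdef
  set z₁ := x₁ / y₁ with hz₁def
  set z₂ := x₂ / y₂ with hz₂def
  have hz₁ : 0 ≤ z₁ := div_nonneg hx₁ hy₁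
  have hz₂ : 0 ≤ z₂ := div_nonneg hx₂ hy₂
  have hid₁ : θ * x₁ = (θ * y₁) * z₁ := by
    rcases eq_or_lt_of_le hy₁ with h | h
    · rw [h₁ h.symm]; simp [hz₁def, ← h]
    · rw [hz₁def]; field_simp
  have hid₂ : θ' * x₂ = (θ' * y₂) * z₂ := by
    rcases eq_or_lt_of_le hy₂ with h | h
    · rw [h₂ h.symm]; simp [hz₂def, ← h]
    · rw [hz₂def]; field_simp
  have hmean := real_mean2 hr (w₁ := θ * y₁ / S) (w₂ := θ' * y₂ / S) (z₁ := z₁) (z₂ := z₂)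
    (div_nonneg (by positivity) hS.le) (div_nonneg (by positivity) hS.le) hz₁ hz₂
    (by field_simp; exact hSdef.symm)
  have hnum : θ * x₁ + θ' * x₂ = S * (θ * y₁ / S * z₁ + θ' * y₂ / S * z₂) := by
    rw [hid₁, hid₂]; field_simp
  have hterm₁ : (θ * y₁) * z₁ ^ (r + 1) = θ * (x₁ ^ (r + 1) / y₁ ^ r) := by
    rcases eq_or_lt_of_le hy₁ with h | h
    · rw [← h, h₁ h.symm, Real.zero_rpow hp.ne']; simp
    · rw [hz₁def, Real.div_rpow hx₁ hy₁, Real.rpow_add h r 1, Real.rpow_one]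
      have : (y₁:ℝ) ^ r ≠ 0 := (Real.rpow_pos_of_pos h r).ne'
      field_simp
  have hterm₂ : (θ' * y₂) * z₂ ^ (r + 1) = θ' * (x₂ ^ (r + 1) / y₂ ^ r) := by
    rcases eq_or_lt_of_le hy₂ with h | h
    · rw [← h, h₂ h.symm, Real.zero_rpow hp.ne']; simp
    · rw [hz₂def, Real.div_rpow hx₂ hy₂, Real.rpow_add h r 1, Real.rpow_one]
      have : (y₂:ℝ) ^ r ≠ 0 := (Real.rpow_pos_of_pos h r).ne'
      field_simp
  have hSr : (0:ℝ) < S ^ r := Real.rpow_pos_of_pos hS r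
  calc (θ * x₁ + θ' * x₂) ^ (r + 1) / S ^ r
      = S * (θ * y₁ / S * z₁ + θ' * y₂ / S * z₂) ^ (r + 1) := by
        rw [hnum, Real.mul_rpow hS.le (by positivity), Real.rpow_add hS r 1, Real.rpow_one]
        field_simp
    _ ≤ S * (θ * y₁ / S * z₁ ^ (r + 1) + θ' * y₂ / S * z₂ ^ (r + 1)) := by
        exact mul_le_mul_of_nonneg_left hmean hS.le
    _ = (θ * y₁) * z₁ ^ (r + 1) + (θ' * y₂) * z₂ ^ (r + 1) := by field_simp
    _ = θ * (x₁ ^ (r + 1) / y₁ ^ r) + θ' * (x₂ ^ (r + 1) / y₂ ^ r) := by rw [hterm₁, hterm₂]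

lemma ofReal_div_le {u v : ℝ} (hv : 0 ≤ v) :
    ENNReal.ofReal (u / v) ≤ ENNReal.ofReal u / ENNReal.ofReal v := by
  rcases eq_or_lt_of_le hv with h | h
  · simp [← h]
  · rw [ENNReal.ofReal_div_of_pos h]

/-- Pointwise convexity inequality in ℝ≥0∞. -/
lemma pt_key {r θ θ' y₁ y₂ f₁ f₂ : ℝ} (hr : 1 ≤ r)
    (hθ : 0 < θ) (hθ' : 0 < θ') (hsum : θ + θ' = 1) (hy₁ : 0 ≤ y₁) (hy₂ : 0 ≤ y₂) :
    ENNReal.ofReal (|θ * f₁ + θ' * f₂| ^ (r + 1)) / ENNReal.ofReal ((θ * y₁ + θ' * y₂) ^ r)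
      ≤ ENNReal.ofReal θ * (ENNReal.ofReal (|f₁| ^ (r + 1)) / ENNReal.ofReal (y₁ ^ r))
        + ENNReal.ofReal θ' * (ENNReal.ofReal (|f₂| ^ (r + 1)) / ENNReal.ofReal (y₂ ^ r)) := by
  have hp : (0:ℝ) < r + 1 := by linarith
  have hr0 : r ≠ 0 := by linarith
  by_cases h1 : y₁ = 0 ∧ f₁ ≠ 0
  · have ht : ENNReal.ofReal (|f₁| ^ (r + 1)) / ENNReal.ofReal (y₁ ^ r) = ⊤ := by
      rw [h1.1, Real.zero_rpow hr0, ENNReal.ofReal_zero, ENNReal.div_zero]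
      exact (ENNReal.ofReal_pos.mpr (Real.rpow_pos_of_pos (abs_pos.mpr h1.2) _)).ne'
    rw [ht, ENNReal.mul_top (ENNReal.ofReal_pos.mpr hθ).ne']
    exact le_top.trans le_self_add
  by_cases h2 : y₂ = 0 ∧ f₂ ≠ 0
  · have ht : ENNReal.ofReal (|f₂| ^ (r + 1)) / ENNReal.ofReal (y₂ ^ r) = ⊤ := by
      rw [h2.1, Real.zero_rpow hr0, ENNReal.ofReal_zero, ENNReal.div_zero]
      exact (ENNReal.ofReal_pos.mpr (Real.rpow_pos_of_pos (abs_pos.mpr h2.2) _)).ne'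
    rw [ht, ENNReal.mul_top (ENNReal.ofReal_pos.mpr hθ').ne']
    exact le_top.trans le_add_self
  push_neg at h1 h2
  by_cases hS : θ * y₁ + θ' * y₂ = 0
  · have hy₁0 : y₁ = 0 := by nlinarith [mul_nonneg hθ.le hy₁, mul_nonneg hθ'.le hy₂]
    have hy₂0 : y₂ = 0 := by nlinarith [mul_nonneg hθ.le hy₁, mul_nonneg hθ'.le hy₂]
    have hf₁ := h1 hy₁0
    have hf₂ := h2 hy₂0
    rw [hf₁, hf₂]
    simp [Real.zero_rpow hp.ne', ENNReal.zero_div]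
  · have hSpos : 0 < θ * y₁ + θ' * y₂ :=
      lt_of_le_of_ne (by positivity) (Ne.symm hS)
    have habs : |θ * f₁ + θ' * f₂| ≤ θ * |f₁| + θ' * |f₂| := by
      calc |θ * f₁ + θ' * f₂| ≤ |θ * f₁| + |θ' * f₂| := abs_add_le _ _
        _ = θ * |f₁| + θ' * |f₂| := by rw [abs_mul, abs_mul, abs_of_pos hθ, abs_of_pos hθ']
    calc ENNReal.ofReal (|θ * f₁ + θ' * f₂| ^ (r + 1)) / ENNReal.ofReal ((θ * y₁ + θ' * y₂) ^ r)
        ≤ ENNReal.ofReal ((θ * |f₁| + θ' * |f₂|) ^ (r + 1))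
            / ENNReal.ofReal ((θ * y₁ + θ' * y₂) ^ r) :=
          ENNReal.div_le_div_right (ENNReal.ofReal_le_ofReal
            (Real.rpow_le_rpow (abs_nonneg _) habs hp.le)) _
      _ = ENNReal.ofReal ((θ * |f₁| + θ' * |f₂|) ^ (r + 1) / (θ * y₁ + θ' * y₂) ^ r) :=
          (ENNReal.ofReal_div_of_pos (Real.rpow_pos_of_pos hSpos r)).symm
      _ ≤ ENNReal.ofReal (θ * (|f₁| ^ (r + 1) / y₁ ^ r) + θ' * (|f₂| ^ (r + 1) / y₂ ^ r)) :=
          ENNReal.ofReal_le_ofReal (real_key_s7 hr hθ hθ' (abs_nonneg _) (abs_nonneg _) hy₁ hy₂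
            (fun h => by simp [h1 h]) (fun h => by simp [h2 h]) hSpos)
      _ ≤ _ := by
          rw [ENNReal.ofReal_add (by positivity) (by positivity),
            ENNReal.ofReal_mul hθ.le, ENNReal.ofReal_mul hθ'.le]
          gcongr
          · exact ofReal_div_le (Real.rpow_nonneg hy₁ r)
          · exact ofReal_div_le (Real.rpow_nonneg hy₂ r)

theorem feasible_region_convex
    {V A : Type*} [Fintype V] [Fintype A] [Nonempty V] [Nonempty A]
    (r : ℝ) (hr : 1 ≤ r) (Γ : Matrix V A ℝ) (s t : V) (hst : s ≠ t)
    (b : V → ℝ) (hbs : b s = 1) (hbt : b t = -1)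
    (hb : ∀ v, v ≠ s → v ≠ t → b v = 0)
    (B : ℝ≥0∞) :
    Convex ℝ {y : A → ℝ | (∀ a, y a ≥ 0) ∧ effRes r Γ b y ≤ B} := by
  intro y₁ hy₁ y₂ hy₂ θ θ' hθ hθ' hsum
  refine ⟨fun a => add_nonneg (mul_nonneg hθ (hy₁.1 a)) (mul_nonneg hθ' (hy₂.1 a)), ?_⟩
  rcases eq_or_lt_of_le hθ with h0 | hθpos
  · have : θ' = 1 := by linarith
    simp only [← h0, this, zero_smul, one_smul, zero_add]
    exact hy₂.2
  rcases eq_or_lt_of_le hθ' with h0' | hθ'pos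
  · have : θ = 1 := by linarith
    simp only [← h0', this, zero_smul, one_smul, add_zero]
    exact hy₁.2
  apply ENNReal.le_of_forall_pos_le_add
  intro ε hε hB
  have hεne : (ε : ℝ≥0∞) ≠ 0 := by exact_mod_cast hε.ne'
  have h₁ : effRes r Γ b y₁ < B + ε := lt_of_le_of_lt hy₁.2 (ENNReal.lt_add_right hB.ne hεne)
  have h₂ : effRes r Γ b y₂ < B + ε := lt_of_le_of_lt hy₂.2 (ENNReal.lt_add_right hB.ne hεne)
  rw [effRes, iInf_lt_iff] at h₁ h₂
  obtain ⟨f₁, h₁⟩ := h₁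
  obtain ⟨f₂, h₂⟩ := h₂
  rw [iInf_lt_iff] at h₁ h₂
  obtain ⟨hf₁, hF₁⟩ := h₁
  obtain ⟨hf₂, hF₂⟩ := h₂
  have hvalid : Γ.mulVec (θ • f₁ + θ' • f₂) = b := by
    rw [Matrix.mulVec_add, Matrix.mulVec_smul, Matrix.mulVec_smul, hf₁, hf₂, ← add_smul,
      hsum, one_smul]
  calc effRes r Γ b (θ • y₁ + θ' • y₂)
      ≤ ∑ a, ENNReal.ofReal (|(θ • f₁ + θ' • f₂) a| ^ (r + 1))
          / ENNReal.ofReal (((θ • y₁ + θ' • y₂) a) ^ r) := by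
        exact iInf₂_le (θ • f₁ + θ' • f₂) hvalid
    _ ≤ ∑ a, (ENNReal.ofReal θ * (ENNReal.ofReal (|f₁ a| ^ (r + 1)) / ENNReal.ofReal ((y₁ a) ^ r))
          + ENNReal.ofReal θ' * (ENNReal.ofReal (|f₂ a| ^ (r + 1)) / ENNReal.ofReal ((y₂ a) ^ r))) := by
        apply Finset.sum_le_sum
        intro a _
        simpa [Pi.add_apply, Pi.smul_apply, smul_eq_mul] using
          pt_key hr hθpos hθ'pos hsum (hy₁.1 a) (hy₂.1 a)
    _ = ENNReal.ofReal θ * ∑ a, (ENNReal.ofReal (|f₁ a| ^ (r + 1)) / ENNReal.ofReal ((y₁ a) ^ r))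
          + ENNReal.ofReal θ' * ∑ a, (ENNReal.ofReal (|f₂ a| ^ (r + 1)) / ENNReal.ofReal ((y₂ a) ^ r)) := by
        rw [Finset.sum_add_distrib, Finset.mul_sum, Finset.mul_sum]
    _ ≤ ENNReal.ofReal θ * (B + ε) + ENNReal.ofReal θ' * (B + ε) := by
        gcongr
    _ = B + ε := by
        rw [← add_mul, ← ENNReal.ofReal_add hθ hθ', hsum, ENNReal.ofReal_one, one_mul]
end

section
/- Let A be a nonempty finite type, r ≥ 1 and B > 0 real numbers, c : A → ℝ with c a ≥ 0 for all a, and y : A → ℝ with y a > 0 for all a and ∑ a, (y a) ^ (-r) ≤ B. Then ∑ a, c a * y a ≥ B ^ (-(1/r)) * (∑ a, (c a) ^ (r/(r+1))) ^ ((r+1)/r) (real rpow). (Optimality bound from Lemma 6 and reformulation (9): for any conductances on a path whose effective resistance ∑_a 1/y_a^r does not exceed B, the variable cost ∑_a c_a y_a is at least B^{-1/r} (∑_a c_a^{r/(r+1)})^{(r+1)/r}.) -/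
theorem path_cost_lower_bound
    {A : Type*} [Fintype A] [Nonempty A] (r : ℝ) (hr : 1 ≤ r)
    (B : ℝ) (hB : 0 < B) (c : A → ℝ) (hc : ∀ a, 0 ≤ c a)
    (y : A → ℝ) (hy : ∀ a, 0 < y a)
    (hres : ∑ a, (y a) ^ (-r) ≤ B) :
    ∑ a, c a * y a ≥
      B ^ (-(1 / r)) * (∑ a, (c a) ^ (r / (r + 1))) ^ ((r + 1) / r) := by
  have hr0 : (0:ℝ) < r := lt_of_lt_of_le one_pos hr
  have hr1 : (0:ℝ) < r + 1 := by linarith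
  set p : ℝ := (r + 1) / r with hp
  set q : ℝ := r + 1 with hq
  have hpq : Real.HolderConjugate p q := by
    rw [Real.holderConjugate_iff]
    constructor
    · rw [hp]; rw [lt_div_iff₀ hr0]; linarith
    · rw [hp, hq]
      field_simp
  set S : ℝ := ∑ a, c a * y a with hS
  set T : ℝ := ∑ a, (c a) ^ (r / (r + 1)) with hT
  have hS0 : 0 ≤ S := Finset.sum_nonneg fun a _ => mul_nonneg (hc a) (hy a).le
  have hT0 : 0 ≤ T := Finset.sum_nonneg fun a _ => Real.rpow_nonneg (hc a) _
  -- Hölder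
  have key : T ≤ S ^ (1 / p) * B ^ (1 / q) := by
    have h := Real.inner_le_Lp_mul_Lq_of_nonneg (Finset.univ) hpq
      (f := fun a => (c a * y a) ^ (r / (r + 1)))
      (g := fun a => (y a) ^ (-(r / (r + 1))))
      (fun a _ => Real.rpow_nonneg (mul_nonneg (hc a) (hy a).le) _)
      (fun a _ => Real.rpow_nonneg (hy a).le _)
    have e1 : ∀ a : A, (c a * y a) ^ (r / (r + 1)) * (y a) ^ (-(r / (r + 1)))
        = (c a) ^ (r / (r + 1)) := by
      intro a
      rw [Real.mul_rpow (hc a) (hy a).le, mul_assoc,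
        ← Real.rpow_add (hy a), add_neg_cancel, Real.rpow_zero, mul_one]
    have e2 : ∀ a : A, ((c a * y a) ^ (r / (r + 1))) ^ p = c a * y a := by
      intro a
      rw [← Real.rpow_mul (mul_nonneg (hc a) (hy a).le), hp,
        show r / (r+1) * ((r+1)/r) = 1 by field_simp, Real.rpow_one]
    have e3 : ∀ a : A, ((y a) ^ (-(r / (r + 1)))) ^ q = (y a) ^ (-r) := by
      intro a
      rw [← Real.rpow_mul (hy a).le, hq,
        show -(r / (r+1)) * (r+1) = -r by field_simp]
    simp only [e1, e2, e3] at h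
    refine h.trans ?_
    have hq0 : (0:ℝ) < 1/q := by rw [hq]; positivity
    gcongr
    exact Finset.sum_nonneg fun a _ => Real.rpow_nonneg (hy a).le _
  -- raise to power p
  have key2 : T ^ p ≤ S * B ^ (1 / r) := by
    have h := Real.rpow_le_rpow hT0 key (le_of_lt hpq.pos)
    rwa [Real.mul_rpow (Real.rpow_nonneg hS0 _) (Real.rpow_nonneg hB.le _),
      ← Real.rpow_mul hS0, ← Real.rpow_mul hB.le, one_div_mul_cancel hpq.ne_zero,
      Real.rpow_one, hq, hp, div_mul_div_comm, one_mul,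
      show (r+1)/((r+1)*r) = 1/r by field_simp] at h
  have hBpow : (0:ℝ) < B ^ (1 / r) := Real.rpow_pos_of_pos hB _
  rw [ge_iff_le, Real.rpow_neg hB.le, ← hT, hp] at *
  calc (B ^ (1/r))⁻¹ * T ^ ((r+1)/r) ≤ (B ^ (1/r))⁻¹ * (S * B ^ (1/r)) := by
        gcongr
    _ = S := by field_simp
end

section
/- Let A be a nonempty finite type, r ≥ 1 and B > 0 real numbers, and c : A → ℝ with c a > 0 for all a. Set Σ := ∑ a', (c a') ^ (r/(r+1)) and define y : A → ℝ by y a = Σ ^ (1/r) / ((c a) ^ (1/(r+1)) * B ^ (1/r)) (real rpow). Then: (i) ∑ a, (y a) ^ (-r) = B; (ii) ∑ a, c a * y a = B ^ (-(1/r)) * Σ ^ ((r+1)/r); and (iii) for every a : A, c a * (y a) ^ (r+1) / r = Σ ^ ((r+1)/r) / (r * B ^ ((r+1)/r)), i.e. the quantity c_a y_a^{r+1}/r is the same for all a. (Lemma 6 and equation (8) of the paper: the explicit KKT-optimal conductances on a path attain the resistance budget B with equality, achieve the cost B^{-1/r}(∑_a c_a^{r/(r+1)})^{(r+1)/r}, and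 satisfy the KKT condition λ = c_a y_a^{r+1}/r with a multiplier λ independent of a.) -/
theorem kkt_optimal_conductances
    {A : Type*} [Fintype A] [Nonempty A] (r : ℝ) (hr : 1 ≤ r)
    (B : ℝ) (hB : 0 < B) (c : A → ℝ) (hc : ∀ a, 0 < c a)
    (S : ℝ) (hS : S = ∑ a', (c a') ^ (r / (r + 1)))
    (y : A → ℝ)
    (hy : ∀ a, y a = S ^ (1 / r) / ((c a) ^ (1 / (r + 1)) * B ^ (1 / r))) :
    (∑ a, (y a) ^ (-r) = B) ∧
    (∑ a, c a * y a = B ^ (-(1 / r)) * S ^ ((r + 1) / r)) ∧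
    (∀ a : A, c a * (y a) ^ (r + 1) / r =
      S ^ ((r + 1) / r) / (r * B ^ ((r + 1) / r))) := by
  have hr0 : 0 < r := lt_of_lt_of_le one_pos hr
  have hr1 : 0 < r + 1 := by linarith
  have hS0 : 0 < S := by
    rw [hS]
    exact Finset.sum_pos (fun a _ => Real.rpow_pos_of_pos (hc a) _) Finset.univ_nonempty
  have hcr : ∀ a : A, 0 < (c a) ^ (r / (r + 1)) := fun a =>
    Real.rpow_pos_of_pos (hc a) _
  have hcr1 : ∀ a : A, 0 < (c a) ^ (1 / (r + 1)) := fun a =>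
    Real.rpow_pos_of_pos (hc a) _
  have hBr : 0 < B ^ (1 / r) := Real.rpow_pos_of_pos hB _
  have hSr : 0 < S ^ (1 / r) := Real.rpow_pos_of_pos hS0 _
  have hy0 : ∀ a : A, 0 < y a := fun a => by
    rw [hy a]; exact div_pos hSr (mul_pos (hcr1 a) hBr)
  -- part 1
  have key1 : ∀ a : A, (y a) ^ (-r) = (c a) ^ (r / (r + 1)) * B / S := by
    intro a
    have h : (y a) ^ r = S / ((c a) ^ (r / (r + 1)) * B) := by
      rw [hy a, Real.div_rpow hSr.le (mul_pos (hcr1 a) hBr).le,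
        Real.mul_rpow (hcr1 a).le hBr.le,
        ← Real.rpow_mul hS0.le, ← Real.rpow_mul (hc a).le,
        ← Real.rpow_mul hB.le, one_div_mul_cancel hr0.ne', Real.rpow_one,
        Real.rpow_one, show 1 / (r + 1) * r = r / (r + 1) by ring]
    rw [Real.rpow_neg (hy0 a).le, h]
    rw [inv_div]
  have part1 : ∑ a, (y a) ^ (-r) = B := by
    rw [Finset.sum_congr rfl (fun a _ => key1 a)]
    rw [← Finset.sum_div, ← Finset.sum_mul, ← hS]
    field_simp
  -- part 2
  have key2 : ∀ a : A, c a * y a = (c a) ^ (r / (r + 1)) * (B ^ (-(1 / r)) * S ^ (1 / r)) := by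
    intro a
    have hcc : (c a) ^ (r / (r + 1)) = c a * (c a) ^ (-(1 / (r + 1))) := by
      rw [show r / (r + 1) = 1 + -(1 / (r + 1)) by field_simp; ring,
        Real.rpow_add (hc a), Real.rpow_one]
    rw [hy a, hcc, Real.rpow_neg (hc a).le, Real.rpow_neg hB.le]
    field_simp
  have part2 : ∑ a, c a * y a = B ^ (-(1 / r)) * S ^ ((r + 1) / r) := by
    rw [Finset.sum_congr rfl (fun a _ => key2 a), ← Finset.sum_mul, ← hS]
    have hSS : S ^ ((r + 1) / r) = S * S ^ (1 / r) := by
      rw [show (r + 1) / r = 1 + 1 / r by field_simp, Real.rpow_add hS0, Real.rpow_one]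
    rw [hSS]; ring
  -- part 3
  have part3 : ∀ a : A, c a * (y a) ^ (r + 1) / r =
      S ^ ((r + 1) / r) / (r * B ^ ((r + 1) / r)) := by
    intro a
    have hyr1 : (y a) ^ (r + 1) = S ^ ((r + 1) / r) / (c a * B ^ ((r + 1) / r)) := by
      rw [hy a, Real.div_rpow hSr.le (mul_pos (hcr1 a) hBr).le,
        Real.mul_rpow (hcr1 a).le hBr.le,
        ← Real.rpow_mul hS0.le, ← Real.rpow_mul (hc a).le, ← Real.rpow_mul hB.le,
        show 1 / r * (r + 1) = (r + 1) / r by ring,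
        show 1 / (r + 1) * (r + 1) = 1 by field_simp, Real.rpow_one]
    rw [hyr1, ← mul_div_assoc, mul_div_mul_left _ _ (hc a).ne', div_div,
      mul_comm (B ^ ((r + 1) / r)) r]
  exact ⟨part1, part2, part3⟩
end

section
/- Assume Γ is a node–arc incidence matrix. Suppose there are sets V₁ V₂ : Set V, a vertex m : V, and a set A₁ : Set A such that V₁ ∩ V₂ = {m}, s ∈ V₁, s ≠ m, t ∈ V₂, t ≠ m, every arc a ∈ A₁ has both endpoints in V₁, and every arc a ∉ A₁ has both endpoints in V₂. For y : A → ℝ with y a ≥ 0 for all a, let R₁ y be the infimum, over all f : A → ℝ with f a = 0 for a ∉ A₁ and Γ.mulVec f equal to the vector with value 1 at s, −1 at m, and 0 elsewhere, of ∑ a, ENNReal.ofReal (|f a| ^ (r+1)) / ENNReal.ofReal ((y a) ^ r); let R₂ y be defined analogously with the roles (A₁, s, m) replaced by (Aᶜ₁, m, t). Then R y = R₁ y + R₂ y (addition in ℝ≥0∞). (Lemma 8, series composition: if G is a series composition of G₁ and G₂ at the node m, then the effective resistance satisfies R_{s,t} = R₁ + R₂.) -/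
open scoped ENNReal

/-- If `S`-arcs have all endpoints inside `W` and non-`S`-arcs avoid `W \ {m}`,
then restricting a flow `f` to `S` yields a flow with the expected divergence. -/
lemma mulVec_indicator_eq {V A : Type*} [Fintype V] [Fintype A] [DecidableEq V]
    (Γ : Matrix V A ℝ) (hcol : ∀ a, ∑ w, Γ w a = 0)
    (W : Set V) (S : Set A) (m : V)
    (h1 : ∀ a ∈ S, ∀ w, Γ w a ≠ 0 → w ∈ W)
    (h2 : ∀ a ∉ S, ∀ w ∈ W, w ≠ m → Γ w a = 0)
    (f : A → ℝ) (c d : V → ℝ) (hf : Γ.mulVec f = c)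
    (hd0 : ∀ v ∉ W, d v = 0)
    (hdW : ∀ v ∈ W, v ≠ m → d v = c v)
    (hdsum : ∑ v, d v = 0) :
    Γ.mulVec (S.indicator f) = d := by
  classical
  set g : V → ℝ := Γ.mulVec (S.indicator f) with hg
  have happly : ∀ v, g v = ∑ a, Γ v a * S.indicator f a := by
    intro v; simp [hg, Matrix.mulVec, dotProduct]
  have hg_ne : ∀ v, v ≠ m → g v = d v := by
    intro v hv
    by_cases hvW : v ∈ W
    · have : ∀ a, Γ v a * S.indicator f a = Γ v a * f a := by
        intro a
        by_cases ha : a ∈ S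
        · rw [Set.indicator_of_mem ha]
        · rw [h2 a ha v hvW hv]; ring
      have hgv : g v = (Γ.mulVec f) v := by
        rw [happly]
        simp only [this]
        simp [Matrix.mulVec, dotProduct]
      rw [hgv, hf, hdW v hvW hv]
    · rw [happly, hd0 v hvW]
      apply Finset.sum_eq_zero
      intro a _
      by_cases ha : a ∈ S
      · by_cases hΓv : Γ v a = 0
        · rw [hΓv]; ring
        · exact absurd (h1 a ha v hΓv) hvW
      · rw [Set.indicator_of_notMem ha]; ring
  have hgsum : ∑ v, g v = 0 := by
    have : ∑ v, g v = ∑ a, (∑ v, Γ v a) * S.indicator f a := by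
      simp only [happly]
      rw [Finset.sum_comm]
      simp [Finset.sum_mul]
    rw [this]
    apply Finset.sum_eq_zero
    intro a _
    rw [hcol a]; ring
  funext v
  by_cases hv : v = m
  · subst hv
    have e1 : g v + ∑ w ∈ Finset.univ.erase v, g w = 0 := by
      rw [Finset.add_sum_erase _ _ (Finset.mem_univ v)]; exact hgsum
    have e2 : d v + ∑ w ∈ Finset.univ.erase v, d w = 0 := by
      rw [Finset.add_sum_erase _ _ (Finset.mem_univ v)]; exact hdsum
    have e3 : ∑ w ∈ Finset.univ.erase v, g w = ∑ w ∈ Finset.univ.erase v, d w :=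
      Finset.sum_congr rfl fun w hw => hg_ne w (Finset.mem_erase.1 hw).1
    rw [e3] at e1
    linarith
  · exact hg_ne v hv

theorem effRes_series_composition
    {V A : Type*} [Fintype V] [Fintype A] [Nonempty V] [Nonempty A]
    [DecidableEq V]
    (r : ℝ) (hr : 1 ≤ r) (Γ : Matrix V A ℝ) (s t : V) (hst : s ≠ t)
    (b : V → ℝ) (hbs : b s = 1) (hbt : b t = -1)
    (hb : ∀ v, v ≠ s → v ≠ t → b v = 0)
    (hΓ : ∀ a : A, ∃ u v : V, u ≠ v ∧ Γ u a = 1 ∧ Γ v a = -1 ∧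
      ∀ w, w ≠ u → w ≠ v → Γ w a = 0)
    (V₁ V₂ : Set V) (m : V) (A₁ : Set A)
    (hV : V₁ ∩ V₂ = {m})
    (hsV₁ : s ∈ V₁) (hsm : s ≠ m) (htV₂ : t ∈ V₂) (htm : t ≠ m)
    (hA₁ : ∀ a ∈ A₁, ∀ w : V, Γ w a ≠ 0 → w ∈ V₁)
    (hA₂ : ∀ a ∉ A₁, ∀ w : V, Γ w a ≠ 0 → w ∈ V₂)
    (y : A → ℝ) (hy : ∀ a, 0 ≤ y a) :
    effRes r Γ b y =
      (⨅ (f : A → ℝ) (_ : (∀ a ∉ A₁, f a = 0) ∧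
          Γ.mulVec f = fun v => if v = s then 1 else if v = m then -1 else 0),
        ∑ a, ENNReal.ofReal (|f a| ^ (r + 1)) / ENNReal.ofReal ((y a) ^ r)) +
      (⨅ (f : A → ℝ) (_ : (∀ a ∈ A₁, f a = 0) ∧
          Γ.mulVec f = fun v => if v = m then 1 else if v = t then -1 else 0),
        ∑ a, ENNReal.ofReal (|f a| ^ (r + 1)) / ENNReal.ofReal ((y a) ^ r)) := by
  classical
  set C : (A → ℝ) → ℝ≥0∞ :=
    fun f => ∑ a, ENNReal.ofReal (|f a| ^ (r + 1)) / ENNReal.ofReal ((y a) ^ r) with hC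
  set b₁ : V → ℝ := fun v => if v = s then 1 else if v = m then -1 else 0 with hb₁
  set b₂ : V → ℝ := fun v => if v = m then 1 else if v = t then -1 else 0 with hb₂
  -- basic membership facts
  have hmV : m ∈ V₁ ∩ V₂ := hV ▸ rfl
  have hmV₁ : m ∈ V₁ := hmV.1
  have hmV₂ : m ∈ V₂ := hmV.2
  have hsV₂ : s ∉ V₂ := by
    intro h
    have : s ∈ V₁ ∩ V₂ := ⟨hsV₁, h⟩
    rw [hV] at this
    exact hsm this
  have htV₁ : t ∉ V₁ := by
    intro h
    have : t ∈ V₁ ∩ V₂ := ⟨h, htV₂⟩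
    rw [hV] at this
    exact htm this
  -- column sums of the incidence matrix vanish
  have hcol : ∀ a, ∑ w, Γ w a = 0 := by
    intro a
    obtain ⟨u, v, huv, hu, hv, h0⟩ := hΓ a
    have : ∀ w, Γ w a = (if w = u then (1:ℝ) else 0) + (if w = v then (-1:ℝ) else 0) := by
      intro w
      by_cases h1 : w = u <;> by_cases h2 : w = v
      · exact absurd (h1 ▸ h2) huv
      · simp [h1, h2, hu, huv, Ne.symm huv]
      · simp [h1, h2, hv, huv, Ne.symm huv]
      · simp [h1, h2, h0 w h1 h2]
    simp [this, Finset.sum_add_distrib]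
  -- the zero-flow term vanishes
  have term_zero : ∀ a : A, ENNReal.ofReal (|(0:ℝ)| ^ (r + 1)) / ENNReal.ofReal ((y a) ^ r) = 0 := by
    intro a
    rw [abs_zero, Real.zero_rpow (by linarith : r + 1 ≠ 0)]
    simp
  -- the cost splits over flows with disjoint supports
  have cost_split : ∀ f₁ f₂ : A → ℝ, (∀ a, f₁ a = 0 ∨ f₂ a = 0) →
      C (f₁ + f₂) = C f₁ + C f₂ := by
    intro f₁ f₂ h
    rw [hC]
    simp only
    rw [← Finset.sum_add_distrib]
    apply Finset.sum_congr rfl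
    intro a _
    rcases h a with h | h <;>
      simp [h, Real.zero_rpow (show r + 1 ≠ 0 by linarith)]
  -- sums of the target divergence vectors vanish
  have hb₁sum : ∑ v, b₁ v = 0 := by
    have : ∀ v, b₁ v = (if v = s then (1:ℝ) else 0) + (if v = m then (-1:ℝ) else 0) := by
      intro v
      by_cases h1 : v = s <;> by_cases h2 : v = m
      · exact absurd (h1 ▸ h2) hsm
      · simp [hb₁, h1, h2, hsm, Ne.symm hsm]
      · simp [hb₁, h1, h2, hsm, Ne.symm hsm]
      · simp [hb₁, h1, h2]
    simp [this, Finset.sum_add_distrib]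
  have hb₂sum : ∑ v, b₂ v = 0 := by
    have : ∀ v, b₂ v = (if v = m then (1:ℝ) else 0) + (if v = t then (-1:ℝ) else 0) := by
      intro v
      by_cases h1 : v = m <;> by_cases h2 : v = t
      · exact absurd (h2 ▸ h1) htm
      · simp [hb₂, h1, h2, htm, Ne.symm htm]
      · simp [hb₂, h1, h2, htm, Ne.symm htm]
      · simp [hb₂, h1, h2]
    simp [this, Finset.sum_add_distrib]
  -- key constructions: restrictions of a feasible flow
  have key₁ : ∀ f : A → ℝ, Γ.mulVec f = b → Γ.mulVec (A₁.indicator f) = b₁ := by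
    intro f hf
    apply mulVec_indicator_eq Γ hcol V₁ A₁ m hA₁ _ f b b₁ hf _ _ hb₁sum
    · intro a ha w hwV₁ hwm
      by_contra hΓw
      have : w ∈ V₁ ∩ V₂ := ⟨hwV₁, hA₂ a ha w hΓw⟩
      rw [hV] at this
      exact hwm this
    · intro v hv
      have h1 : v ≠ s := fun h => hv (h ▸ hsV₁)
      have h2 : v ≠ m := fun h => hv (h ▸ hmV₁)
      simp [hb₁, h1, h2]
    · intro v hvV₁ hvm
      by_cases h1 : v = s
      · simp [hb₁, h1, hbs]
      · have h2 : v ≠ t := fun h => htV₁ (h ▸ hvV₁)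
        simp [hb₁, h1, hvm, hb v h1 h2]
  have key₂ : ∀ f : A → ℝ, Γ.mulVec f = b → Γ.mulVec (A₁ᶜ.indicator f) = b₂ := by
    intro f hf
    apply mulVec_indicator_eq Γ hcol V₂ A₁ᶜ m _ _ f b b₂ hf _ _ hb₂sum
    · intro a ha w hΓw
      exact hA₂ a ha w hΓw
    · intro a ha w hwV₂ hwm
      rw [Set.notMem_compl_iff] at ha
      by_contra hΓw
      have : w ∈ V₁ ∩ V₂ := ⟨hA₁ a ha w hΓw, hwV₂⟩
      rw [hV] at this
      exact hwm this
    · intro v hv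
      have h1 : v ≠ m := fun h => hv (h ▸ hmV₂)
      have h2 : v ≠ t := fun h => hv (h ▸ htV₂)
      simp [hb₂, h1, h2]
    · intro v hvV₂ hvm
      by_cases h1 : v = t
      · simp [hb₂, h1, hvm, htm, hbt]
      · have h2 : v ≠ s := fun h => hsV₂ (h ▸ hvV₂)
        simp [hb₂, h1, hvm, hb v h2 h1]
  have hdecomp : ∀ f : A → ℝ, f = A₁.indicator f + A₁ᶜ.indicator f := by
    intro f
    funext a
    by_cases ha : a ∈ A₁ <;> simp [Set.indicator_apply, ha]
  apply le_antisymm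
  · -- effRes ≤ R₁ + R₂
    have key : ∀ g₁ g₂ : A → ℝ, (∀ a ∉ A₁, g₁ a = 0) → Γ.mulVec g₁ = b₁ →
        (∀ a ∈ A₁, g₂ a = 0) → Γ.mulVec g₂ = b₂ → effRes r Γ b y ≤ C g₁ + C g₂ := by
      intro g₁ g₂ hs₁ hΓ₁ hs₂ hΓ₂
      have hfeas : Γ.mulVec (g₁ + g₂) = b := by
        rw [Matrix.mulVec_add, hΓ₁, hΓ₂]
        funext v
        rcases eq_or_ne v s with rfl | h1
        · simp [hb₁, hb₂, hsm, hst, hbs]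
        · rcases eq_or_ne v m with rfl | h2
          · simp [hb₁, hb₂, Ne.symm hsm, Ne.symm htm, hb _ (Ne.symm hsm) (Ne.symm htm)]
          · rcases eq_or_ne v t with rfl | h3
            · simp [hb₁, hb₂, h1, h2, hbt]
            · simp [hb₁, hb₂, h1, h2, h3, hb v h1 h3]
      have hle : effRes r Γ b y ≤ C (g₁ + g₂) := by
        rw [effRes]
        exact iInf₂_le (g₁ + g₂) hfeas
      rw [cost_split g₁ g₂ (fun a => by
        by_cases ha : a ∈ A₁
        · exact Or.inr (hs₂ a ha)
        · exact Or.inl (hs₁ a ha))] at hle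
      exact hle
    simp only [ENNReal.iInf_add, ENNReal.add_iInf]
    refine le_iInf fun g₂ => le_iInf fun h₂ => le_iInf fun g₁ => le_iInf fun h₁ => ?_
    exact key g₁ g₂ h₁.1 h₁.2 h₂.1 h₂.2
  · -- R₁ + R₂ ≤ effRes
    rw [effRes]
    refine le_iInf fun f => le_iInf fun hf => ?_
    have h₁ := key₁ f hf
    have h₂ := key₂ f hf
    have hsplit : C f = C (A₁.indicator f) + C (A₁ᶜ.indicator f) := by
      conv_lhs => rw [hdecomp f]
      exact cost_split _ _ (fun a => by
        by_cases ha : a ∈ A₁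
        · exact Or.inr (by simp [Set.indicator_apply, ha])
        · exact Or.inl (by simp [Set.indicator_apply, ha]))
    calc _ ≤ C (A₁.indicator f) + C (A₁ᶜ.indicator f) := by
            refine add_le_add ?_ ?_
            · exact iInf₂_le (A₁.indicator f)
                ⟨fun a ha => Set.indicator_of_notMem ha f, h₁⟩
            · exact iInf₂_le (A₁ᶜ.indicator f)
                ⟨fun a ha => Set.indicator_of_notMem (by simpa using ha) f, h₂⟩
      _ = C f := hsplit.symm
end

section
/- Assume Γ is a node–arc incidence matrix. Suppose there are sets V₁ V₂ : Set V and a set A₁ : Set A such that V₁ ∩ V₂ = {s, t}, s ∈ V₁, t ∈ V₁, every arc a ∈ A₁ has both endpoints in V₁, and every arc a ∉ A₁ has both endpoints in V₂. For y : A → ℝ with y a ≥ 0 for all a, let R₁ y be the infimum, over all f : A → ℝ with f a = 0 for a ∉ A₁ and Γ.mulVec f = b, of ∑ a, ENNReal.ofReal (|f a| ^ (r+1)) / ENNReal.ofReal ((y a) ^ r); let R₂ y be defined analogously with A₁ replaced by its complement. Then (R y)⁻¹ ^ (1/r) = (R₁ y)⁻¹ ^ (1/r) + (R₂ y)⁻¹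 ^ (1/r), where the inverse and rpow are taken in ℝ≥0∞ (so ∞⁻¹ = 0). (Lemma 8, parallel composition: if G is a parallel composition of G₁ and G₂ between s and t, then the effective conductances satisfy C_{s,t} = C₁ + C₂, equivalently R_{s,t} = R₁R₂ / (R₁^{1/r} + R₂^{1/r})^r.) -/
open scoped ENNReal

section AuxReal

/-- `(x⁻¹) ^ z = x ^ (-z)` for nonneg real `x`. -/
private lemma real_inv_rpow_eq {x : ℝ} (hx : 0 ≤ x) (z : ℝ) : (x⁻¹) ^ z = x ^ (-z) := by
  rw [Real.inv_rpow hx, ← Real.rpow_neg hx]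

private lemma aux_opt {r e₁ e₂ : ℝ} (hr0 : 0 < r) (h1 : 0 < e₁) (h2 : 0 < e₂) :
    (e₁ ^ (-(1/r)) / (e₁ ^ (-(1/r)) + e₂ ^ (-(1/r)))) ^ (r+1) * e₁
      + (e₂ ^ (-(1/r)) / (e₁ ^ (-(1/r)) + e₂ ^ (-(1/r)))) ^ (r+1) * e₂
      = (e₁ ^ (-(1/r)) + e₂ ^ (-(1/r))) ^ (-r) := by
  set c₁ := e₁ ^ (-(1/r)) with hc₁
  set c₂ := e₂ ^ (-(1/r)) with hc₂
  have hc₁p : 0 < c₁ := Real.rpow_pos_of_pos h1 _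
  have hc₂p : 0 < c₂ := Real.rpow_pos_of_pos h2 _
  have hsp : 0 < c₁ + c₂ := by linarith
  have hmul : (-(1/r)) * (-r) = 1 := by field_simp
  have he₁ : c₁ ^ (-r) = e₁ := by
    rw [hc₁, ← Real.rpow_mul h1.le, hmul, Real.rpow_one]
  have he₂ : c₂ ^ (-r) = e₂ := by
    rw [hc₂, ← Real.rpow_mul h2.le, hmul, Real.rpow_one]
  rw [← he₁, ← he₂, Real.div_rpow hc₁p.le hsp.le, Real.div_rpow hc₂p.le hsp.le,
    div_mul_eq_mul_div, div_mul_eq_mul_div, ← Real.rpow_add hc₁p, ← Real.rpow_add hc₂p]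
  have h11 : r + 1 + -r = 1 := by ring
  rw [h11, Real.rpow_one, Real.rpow_one, ← add_div]
  have h' : -r = 1 - (r+1) := by ring
  rw [h', Real.rpow_sub hsp, Real.rpow_one]

private lemma aux_holder {r lam mu e₁ e₂ : ℝ} (hr : 1 ≤ r) (hlm : lam + mu = 1)
    (h1 : 0 < e₁) (h2 : 0 < e₂) :
    (e₁ + e₂) ^ (-(1/r)) ≤
      |lam| ^ ((r+1)/r) * e₁ ^ (-(1/r)) + |mu| ^ ((r+1)/r) * e₂ ^ (-(1/r)) := by
  have hr0 : 0 < r := lt_of_lt_of_le one_pos hr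
  have hq0 : (0:ℝ) < r + 1 := by linarith
  have hpq : Real.HolderConjugate ((r+1)/r) (r+1) := by
    rw [Real.holderConjugate_iff]
    constructor
    · rw [lt_div_iff₀ hr0]; linarith
    · rw [inv_div]; field_simp
  have hE : 0 < e₁ + e₂ := by linarith
  set K := |lam| ^ ((r+1)/r) * e₁ ^ (-(1/r)) + |mu| ^ ((r+1)/r) * e₂ ^ (-(1/r)) with hK
  have hKnn : 0 ≤ K := by positivity
  have key := Real.inner_le_Lp_mul_Lq_of_nonneg (s := (Finset.univ : Finset (Fin 2)))
      (f := ![|lam| * e₁ ^ (-(1/(r+1))), |mu| * e₂ ^ (-(1/(r+1)))])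
      (g := ![e₁ ^ (1/(r+1)), e₂ ^ (1/(r+1))]) hpq
      (by intro i _; fin_cases i <;> simp <;> positivity)
      (by intro i _; fin_cases i <;> simp <;> positivity)
  rw [Fin.sum_univ_two, Fin.sum_univ_two, Fin.sum_univ_two] at key
  simp only [Matrix.cons_val_zero, Matrix.cons_val_one, Matrix.head_cons] at key
  have hcan : ∀ e : ℝ, 0 < e → e ^ (-(1/(r+1))) * e ^ (1/(r+1)) = 1 := by
    intro e he
    rw [← Real.rpow_add he, neg_add_cancel, Real.rpow_zero]
  have hfp : ∀ e c : ℝ, 0 < e → 0 ≤ c →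
      (c * e ^ (-(1/(r+1)))) ^ ((r+1)/r) = c ^ ((r+1)/r) * e ^ (-(1/r)) := by
    intro e c he hc
    rw [Real.mul_rpow hc (Real.rpow_nonneg he.le _), ← Real.rpow_mul he.le]
    congr 2
    field_simp
  have hgq : ∀ e : ℝ, 0 < e → (e ^ (1/(r+1))) ^ (r+1) = e := by
    intro e he
    rw [← Real.rpow_mul he.le, one_div, inv_mul_cancel₀ hq0.ne', Real.rpow_one]
  rw [mul_assoc, mul_assoc, hcan e₁ h1, hcan e₂ h2, mul_one, mul_one,
    hfp e₁ |lam| h1 (abs_nonneg _), hfp e₂ |mu| h2 (abs_nonneg _),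
    hgq e₁ h1, hgq e₂ h2] at key
  -- key : |lam| + |mu| ≤ K ^ (1/((r+1)/r)) * (e₁+e₂) ^ (1/(r+1))
  have h1le : (1:ℝ) ≤ K ^ (1/((r+1)/r)) * (e₁+e₂) ^ (1/(r+1)) := by
    calc (1:ℝ) = lam + mu := hlm.symm
    _ ≤ |lam| + |mu| := add_le_add (le_abs_self _) (le_abs_self _)
    _ ≤ _ := key
  have hEp : 0 < (e₁+e₂) ^ (1/(r+1)) := Real.rpow_pos_of_pos hE _
  have h2le : (e₁+e₂) ^ (-(1/(r+1))) ≤ K ^ (1/((r+1)/r)) := by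
    rw [Real.rpow_neg hE.le, inv_le_iff_one_le_mul₀ hEp]
    linarith [h1le]
  have h3le := Real.rpow_le_rpow (Real.rpow_nonneg hE.le _) h2le
      (le_of_lt (by positivity : (0:ℝ) < (r+1)/r))
  rw [← Real.rpow_mul hE.le, ← Real.rpow_mul hKnn,
    one_div_mul_cancel (by positivity : ((r+1)/r : ℝ) ≠ 0), Real.rpow_one] at h3le
  have hexp : (-(1/(r+1))) * ((r+1)/r) = -(1/r) := by
    field_simp
  rwa [hexp] at h3le

end AuxReal

section AuxENNReal

private lemma ofReal_inv_rpow {x : ℝ} (hx : 0 < x) (z : ℝ) :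
    (ENNReal.ofReal x)⁻¹ ^ z = ENNReal.ofReal (x ^ (-z)) := by
  rw [← ENNReal.ofReal_inv_of_pos hx, ENNReal.ofReal_rpow_of_pos (inv_pos.2 hx),
    real_inv_rpow_eq hx.le]

private lemma aux_rpow_inv_le {r : ℝ} (hr0 : 0 < r) {X S : ℝ≥0∞}
    (h : (X⁻¹) ^ (1/r) ≤ S) : S ^ (-r) ≤ X := by
  have h2 : ((X⁻¹) ^ (1/r)) ^ r ≤ S ^ r := ENNReal.rpow_le_rpow h hr0.le
  rw [← ENNReal.rpow_mul, one_div, inv_mul_cancel₀ hr0.ne', ENNReal.rpow_one] at h2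
  rw [ENNReal.rpow_neg]
  exact le_trans (ENNReal.inv_le_inv.mpr h2) (le_of_eq (inv_inv X))

private lemma aux_le_of_rpow {r : ℝ} (hr0 : 0 < r) {R S : ℝ≥0∞}
    (h : S ^ (-r) ≤ R) : R⁻¹ ^ (1/r) ≤ S := by
  rw [ENNReal.rpow_neg] at h
  have h1 : R⁻¹ ≤ S ^ r := le_trans (ENNReal.inv_le_inv.mpr h) (le_of_eq (inv_inv _))
  have h2 := ENNReal.rpow_le_rpow h1 (by positivity : (0:ℝ) ≤ 1/r)
  rwa [← ENNReal.rpow_mul, mul_one_div_cancel hr0.ne', ENNReal.rpow_one] at h2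

private lemma aux_inv_rpow_mono {r : ℝ} (hr0 : 0 < r) {X Y : ℝ≥0∞} (h : X ≤ Y) :
    Y⁻¹ ^ (1/r) ≤ X⁻¹ ^ (1/r) :=
  ENNReal.rpow_le_rpow (ENNReal.inv_le_inv.mpr h) (by positivity)

end AuxENNReal

section AuxEnergy

variable {A : Type*} [Fintype A]

private lemma En_smul {r : ℝ} (hr1 : 0 ≤ r + 1) (y : A → ℝ) (c : ℝ) (f : A → ℝ) :
    ∑ a, ENNReal.ofReal (|c * f a| ^ (r + 1)) / ENNReal.ofReal ((y a) ^ r)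
      = ENNReal.ofReal (|c| ^ (r + 1)) *
        ∑ a, ENNReal.ofReal (|f a| ^ (r + 1)) / ENNReal.ofReal ((y a) ^ r) := by
  rw [Finset.mul_sum]
  refine Finset.sum_congr rfl fun a _ => ?_
  rw [abs_mul, Real.mul_rpow (abs_nonneg _) (abs_nonneg _),
    ENNReal.ofReal_mul (by positivity), mul_div_assoc]

private lemma En_split {r : ℝ} (hr1 : r + 1 ≠ 0) (y : A → ℝ) (f g : A → ℝ)
    (h : ∀ a, f a = 0 ∨ g a = 0) :
    ∑ a, ENNReal.ofReal (|f a + g a| ^ (r + 1)) / ENNReal.ofReal ((y a) ^ r)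
      = (∑ a, ENNReal.ofReal (|f a| ^ (r + 1)) / ENNReal.ofReal ((y a) ^ r))
        + ∑ a, ENNReal.ofReal (|g a| ^ (r + 1)) / ENNReal.ofReal ((y a) ^ r) := by
  rw [← Finset.sum_add_distrib]
  refine Finset.sum_congr rfl fun a _ => ?_
  rcases h a with h' | h' <;> rw [h'] <;>
    simp [Real.zero_rpow hr1, ENNReal.zero_div]

/-- Key pointwise inequality for the lower bound (Part B). -/
private lemma aux_pair {r : ℝ} (hr : 1 ≤ r) (y : A → ℝ) (f₁ f₂ : A → ℝ)
    (hdisj : ∀ a, f₁ a = 0 ∨ f₂ a = 0) (Rv : ℝ≥0∞)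
    (hRc : ∀ lam mu : ℝ, 0 < lam → 0 < mu → lam + mu = 1 →
      Rv ≤ ∑ a, ENNReal.ofReal (|lam * f₁ a + mu * f₂ a| ^ (r + 1)) /
        ENNReal.ofReal ((y a) ^ r))
    (hR1 : Rv ≤ ∑ a, ENNReal.ofReal (|f₁ a| ^ (r + 1)) / ENNReal.ofReal ((y a) ^ r))
    (hR2 : Rv ≤ ∑ a, ENNReal.ofReal (|f₂ a| ^ (r + 1)) / ENNReal.ofReal ((y a) ^ r)) :
    (∑ a, ENNReal.ofReal (|f₁ a| ^ (r + 1)) / ENNReal.ofReal ((y a) ^ r))⁻¹ ^ (1/r)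
      + (∑ a, ENNReal.ofReal (|f₂ a| ^ (r + 1)) / ENNReal.ofReal ((y a) ^ r))⁻¹ ^ (1/r)
      ≤ Rv⁻¹ ^ (1/r) := by
  have hr0 : 0 < r := lt_of_lt_of_le one_pos hr
  have h1r : 0 < 1/r := by positivity
  set E₁ := ∑ a, ENNReal.ofReal (|f₁ a| ^ (r + 1)) / ENNReal.ofReal ((y a) ^ r) with hE₁
  set E₂ := ∑ a, ENNReal.ofReal (|f₂ a| ^ (r + 1)) / ENNReal.ofReal ((y a) ^ r) with hE₂
  by_cases hz1 : E₁ = 0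
  · have : Rv = 0 := le_antisymm (hz1 ▸ hR1) zero_le
    rw [this, ENNReal.inv_zero, ENNReal.top_rpow_of_pos h1r]
    exact le_top
  by_cases hz2 : E₂ = 0
  · have : Rv = 0 := le_antisymm (hz2 ▸ hR2) zero_le
    rw [this, ENNReal.inv_zero, ENNReal.top_rpow_of_pos h1r]
    exact le_top
  by_cases ht1 : E₁ = ⊤
  · rw [ht1]
    simp only [ENNReal.inv_top, ENNReal.zero_rpow_of_pos h1r, zero_add]
    exact aux_inv_rpow_mono hr0 hR2
  by_cases ht2 : E₂ = ⊤
  · rw [ht2]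
    simp only [ENNReal.inv_top, ENNReal.zero_rpow_of_pos h1r, add_zero]
    exact aux_inv_rpow_mono hr0 hR1
  -- main case
  set e₁ := E₁.toReal with he₁
  set e₂ := E₂.toReal with he₂
  have he₁p : 0 < e₁ := ENNReal.toReal_pos hz1 ht1
  have he₂p : 0 < e₂ := ENNReal.toReal_pos hz2 ht2
  have hE₁e : E₁ = ENNReal.ofReal e₁ := (ENNReal.ofReal_toReal ht1).symm
  have hE₂e : E₂ = ENNReal.ofReal e₂ := (ENNReal.ofReal_toReal ht2).symm
  set c₁ := e₁ ^ (-(1/r)) with hc₁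
  set c₂ := e₂ ^ (-(1/r)) with hc₂
  have hc₁p : 0 < c₁ := Real.rpow_pos_of_pos he₁p _
  have hc₂p : 0 < c₂ := Real.rpow_pos_of_pos he₂p _
  have hsp : 0 < c₁ + c₂ := by linarith
  set lam := c₁ / (c₁ + c₂) with hlam
  set mu := c₂ / (c₁ + c₂) with hmu
  have hlamp : 0 < lam := div_pos hc₁p hsp
  have hmup : 0 < mu := div_pos hc₂p hsp
  have hlm : lam + mu = 1 := by rw [hlam, hmu, ← add_div, div_self hsp.ne']
  have key := hRc lam mu hlamp hmup hlm
  have hcomb : ∑ a, ENNReal.ofReal (|lam * f₁ a + mu * f₂ a| ^ (r + 1)) /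
      ENNReal.ofReal ((y a) ^ r) = ENNReal.ofReal ((c₁ + c₂) ^ (-r)) := by
    rw [En_split (by positivity) y _ _ (fun a => by
        rcases hdisj a with h | h
        · exact Or.inl (by rw [h, mul_zero])
        · exact Or.inr (by rw [h, mul_zero])),
      En_smul (by positivity) y lam f₁, En_smul (by positivity) y mu f₂,
      ← hE₁, ← hE₂, hE₁e, hE₂e,
      ← ENNReal.ofReal_mul (by positivity), ← ENNReal.ofReal_mul (by positivity),
      ← ENNReal.ofReal_add (by positivity) (by positivity),
      abs_of_pos hlamp, abs_of_pos hmup, aux_opt hr0 he₁p he₂p]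
  rw [hcomb] at key
  have hstep : ENNReal.ofReal (c₁ + c₂) ≤ Rv⁻¹ ^ (1/r) := by
    have h1 : Rv⁻¹ ≥ (ENNReal.ofReal ((c₁ + c₂) ^ (-r)))⁻¹ := ENNReal.inv_le_inv.mpr key
    have h2 : (ENNReal.ofReal ((c₁ + c₂) ^ (-r)))⁻¹ = ENNReal.ofReal ((c₁ + c₂) ^ r) := by
      rw [← ENNReal.ofReal_inv_of_pos (Real.rpow_pos_of_pos hsp _),
        ← Real.rpow_neg hsp.le, neg_neg]
    have h3 := ENNReal.rpow_le_rpow (h2 ▸ h1) (le_of_lt h1r)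
    rwa [ENNReal.ofReal_rpow_of_pos (Real.rpow_pos_of_pos hsp _),
      ← Real.rpow_mul hsp.le, mul_one_div_cancel hr0.ne', Real.rpow_one] at h3
  have hlhs : E₁⁻¹ ^ (1/r) + E₂⁻¹ ^ (1/r) = ENNReal.ofReal (c₁ + c₂) := by
    rw [hE₁e, hE₂e, ofReal_inv_rpow he₁p, ofReal_inv_rpow he₂p,
      ENNReal.ofReal_add (Real.rpow_nonneg he₁p.le _) (Real.rpow_nonneg he₂p.le _)]
  rw [hlhs]
  exact hstep

/-- Key pointwise inequality for the upper bound (Part A). -/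
private lemma aux_splitineq {r : ℝ} (hr : 1 ≤ r) (y : A → ℝ) (f₁ f₂ : A → ℝ)
    (lam mu : ℝ) (hlm : lam + mu = 1) (R1 R2 : ℝ≥0∞)
    (h10 : lam = 0 → R2 ≤ ∑ a, ENNReal.ofReal (|f₂ a| ^ (r + 1)) / ENNReal.ofReal ((y a) ^ r))
    (h20 : mu = 0 → R1 ≤ ∑ a, ENNReal.ofReal (|f₁ a| ^ (r + 1)) / ENNReal.ofReal ((y a) ^ r))
    (h1 : lam ≠ 0 → R1 ≤ ∑ a, ENNReal.ofReal (|lam⁻¹ * f₁ a| ^ (r + 1)) /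
      ENNReal.ofReal ((y a) ^ r))
    (h2 : mu ≠ 0 → R2 ≤ ∑ a, ENNReal.ofReal (|mu⁻¹ * f₂ a| ^ (r + 1)) /
      ENNReal.ofReal ((y a) ^ r)) :
    ((∑ a, ENNReal.ofReal (|f₁ a| ^ (r + 1)) / ENNReal.ofReal ((y a) ^ r))
      + ∑ a, ENNReal.ofReal (|f₂ a| ^ (r + 1)) / ENNReal.ofReal ((y a) ^ r))⁻¹ ^ (1/r)
      ≤ R1⁻¹ ^ (1/r) + R2⁻¹ ^ (1/r) := by
  have hr0 : 0 < r := lt_of_lt_of_le one_pos hr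
  have h1r : 0 < 1/r := by positivity
  set E₁ := ∑ a, ENNReal.ofReal (|f₁ a| ^ (r + 1)) / ENNReal.ofReal ((y a) ^ r) with hE₁
  set E₂ := ∑ a, ENNReal.ofReal (|f₂ a| ^ (r + 1)) / ENNReal.ofReal ((y a) ^ r) with hE₂
  by_cases hl0 : lam = 0
  · have key := h10 hl0
    have hEle : (E₁ + E₂)⁻¹ ^ (1/r) ≤ R2⁻¹ ^ (1/r) :=
      aux_inv_rpow_mono hr0 (le_trans key (le_add_of_nonneg_left zero_le))
    exact le_trans hEle (le_add_of_nonneg_left zero_le)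
  by_cases hm0 : mu = 0
  · have key := h20 hm0
    have hEle : (E₁ + E₂)⁻¹ ^ (1/r) ≤ R1⁻¹ ^ (1/r) :=
      aux_inv_rpow_mono hr0 (le_trans key (le_add_of_nonneg_right zero_le))
    exact le_trans hEle (le_add_of_nonneg_right zero_le)
  by_cases ht1 : E₁ = ⊤
  · rw [ht1, top_add, ENNReal.inv_top, ENNReal.zero_rpow_of_pos h1r]
    exact zero_le
  by_cases ht2 : E₂ = ⊤
  · rw [ht2, add_top, ENNReal.inv_top, ENNReal.zero_rpow_of_pos h1r]
    exact zero_le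
  by_cases hz1 : E₁ = 0
  · have hb := h1 hl0
    rw [En_smul (by positivity) y lam⁻¹ f₁, ← hE₁, hz1, mul_zero] at hb
    have hR1 : R1 = 0 := le_antisymm hb zero_le
    rw [hR1, ENNReal.inv_zero, ENNReal.top_rpow_of_pos h1r]
    exact le_trans le_top (le_add_of_nonneg_right zero_le)
  by_cases hz2 : E₂ = 0
  · have hb := h2 hm0
    rw [En_smul (by positivity) y mu⁻¹ f₂, ← hE₂, hz2, mul_zero] at hb
    have hR2 : R2 = 0 := le_antisymm hb zero_le
    rw [hR2, ENNReal.inv_zero, ENNReal.top_rpow_of_pos h1r]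
    exact le_trans le_top (le_add_of_nonneg_left zero_le)
  -- main case
  set e₁ := E₁.toReal with he₁
  set e₂ := E₂.toReal with he₂
  have he₁p : 0 < e₁ := ENNReal.toReal_pos hz1 ht1
  have he₂p : 0 < e₂ := ENNReal.toReal_pos hz2 ht2
  have hE₁e : E₁ = ENNReal.ofReal e₁ := (ENNReal.ofReal_toReal ht1).symm
  have hE₂e : E₂ = ENNReal.ofReal e₂ := (ENNReal.ofReal_toReal ht2).symm
  have habs : ∀ c : ℝ, c ≠ 0 → ∀ e : ℝ, 0 < e →
      (|c⁻¹| ^ (r+1) * e) ^ (-(1/r)) = |c| ^ ((r+1)/r) * e ^ (-(1/r)) := by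
    intro c hc e he
    have hcp : 0 < |c| := abs_pos.mpr hc
    rw [Real.mul_rpow (by positivity) he.le]
    congr 1
    rw [abs_inv, real_inv_rpow_eq hcp.le, ← Real.rpow_mul hcp.le]
    congr 1
    ring
  have claim : ∀ (c : ℝ), c ≠ 0 → ∀ (Rc : ℝ≥0∞) (E : ℝ≥0∞) (e : ℝ), 0 < e →
      E = ENNReal.ofReal e →
      Rc ≤ ENNReal.ofReal (|c⁻¹| ^ (r+1)) * E →
      ENNReal.ofReal (|c| ^ ((r+1)/r) * e ^ (-(1/r))) ≤ Rc⁻¹ ^ (1/r) := by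
    intro c hc Rc E e he hEe hb
    have hcp : 0 < |c⁻¹| := abs_pos.mpr (inv_ne_zero hc)
    have hpos : 0 < |c⁻¹| ^ (r+1) * e := by positivity
    rw [hEe, ← ENNReal.ofReal_mul (by positivity)] at hb
    have := aux_inv_rpow_mono hr0 hb
    rwa [ofReal_inv_rpow hpos, habs c hc e he] at this
  have claim1 := claim lam hl0 R1 E₁ e₁ he₁p hE₁e (by
    have hb := h1 hl0
    rwa [En_smul (by positivity) y lam⁻¹ f₁, ← hE₁] at hb)
  have claim2 := claim mu hm0 R2 E₂ e₂ he₂p hE₂e (by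
    have hb := h2 hm0
    rwa [En_smul (by positivity) y mu⁻¹ f₂, ← hE₂] at hb)
  have hlhs : (E₁ + E₂)⁻¹ ^ (1/r) = ENNReal.ofReal ((e₁ + e₂) ^ (-(1/r))) := by
    rw [hE₁e, hE₂e, ← ENNReal.ofReal_add he₁p.le he₂p.le,
      ofReal_inv_rpow (by linarith)]
  rw [hlhs]
  calc ENNReal.ofReal ((e₁ + e₂) ^ (-(1/r)))
      ≤ ENNReal.ofReal (|lam| ^ ((r+1)/r) * e₁ ^ (-(1/r))
          + |mu| ^ ((r+1)/r) * e₂ ^ (-(1/r))) :=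
        ENNReal.ofReal_le_ofReal (aux_holder hr hlm he₁p he₂p)
    _ = ENNReal.ofReal (|lam| ^ ((r+1)/r) * e₁ ^ (-(1/r)))
          + ENNReal.ofReal (|mu| ^ ((r+1)/r) * e₂ ^ (-(1/r))) := by
        rw [ENNReal.ofReal_add (by positivity) (by positivity)]
    _ ≤ R1⁻¹ ^ (1/r) + R2⁻¹ ^ (1/r) := add_le_add claim1 claim2

end AuxEnergy

section AuxDecomp

private lemma aux_decomp {V A : Type*} [Fintype V] [Fintype A]
    (Γ : Matrix V A ℝ) (s t : V) (hst : s ≠ t)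
    (b : V → ℝ) (hbs : b s = 1) (hbt : b t = -1)
    (hb : ∀ v, v ≠ s → v ≠ t → b v = 0)
    (hΓ : ∀ a : A, ∃ u v : V, u ≠ v ∧ Γ u a = 1 ∧ Γ v a = -1 ∧
      ∀ w, w ≠ u → w ≠ v → Γ w a = 0)
    (V₁ V₂ : Set V) (A₁ : Set A)
    (hV : V₁ ∩ V₂ = {s, t})
    (hA₁ : ∀ a ∈ A₁, ∀ w : V, Γ w a ≠ 0 → w ∈ V₁)
    (hA₂ : ∀ a ∉ A₁, ∀ w : V, Γ w a ≠ 0 → w ∈ V₂)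
    (f : A → ℝ) (hf : Γ.mulVec f = b) :
    Γ.mulVec (A₁.indicator f) = (Γ.mulVec (A₁.indicator f) s) • b ∧
    Γ.mulVec (A₁ᶜ.indicator f) = (1 - Γ.mulVec (A₁.indicator f) s) • b := by
  classical
  set g₁ := Γ.mulVec (A₁.indicator f) with hg₁
  set g₂ := Γ.mulVec (A₁ᶜ.indicator f) with hg₂
  have hadd : ∀ v, g₁ v + g₂ v = b v := by
    intro v
    have h' : g₁ v + g₂ v = Γ.mulVec (A₁.indicator f + A₁ᶜ.indicator f) v := by
      rw [Matrix.mulVec_add]; rfl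
    rw [h', Set.indicator_self_add_compl A₁ f, hf]
  have hz₁ : ∀ w, w ∉ V₁ → g₁ w = 0 := by
    intro w hw
    rw [hg₁]
    apply Finset.sum_eq_zero
    intro a _
    show Γ w a * A₁.indicator f a = 0
    by_cases ha : a ∈ A₁
    · have h0 : Γ w a = 0 := by
        by_contra h
        exact hw (hA₁ a ha w h)
      rw [h0, zero_mul]
    · rw [Set.indicator_of_notMem ha, mul_zero]
  have hz₂ : ∀ w, w ∉ V₂ → g₂ w = 0 := by
    intro w hw
    rw [hg₂]
    apply Finset.sum_eq_zero
    intro a _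
    show Γ w a * A₁ᶜ.indicator f a = 0
    by_cases ha : a ∈ A₁
    · rw [Set.indicator_of_notMem (by simpa using ha), mul_zero]
    · have h0 : Γ w a = 0 := by
        by_contra h
        exact hw (hA₂ a ha w h)
      rw [h0, zero_mul]
  have hboth : ∀ v, v ≠ s → v ≠ t → g₁ v = 0 := by
    intro v hvs hvt
    have hv2 : v ∉ ({s, t} : Set V) := by
      simp [hvs, hvt]
    rw [← hV] at hv2
    by_cases h1 : v ∈ V₁
    · have h2 : v ∉ V₂ := fun h2 => hv2 ⟨h1, h2⟩
      have hb' := hb v hvs hvt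
      have := hadd v
      have := hz₂ v h2
      linarith
    · exact hz₁ v h1
  have hsum : ∑ v, g₁ v = 0 := by
    rw [hg₁]
    show ∑ v, ∑ a, Γ v a * A₁.indicator f a = 0
    rw [Finset.sum_comm]
    apply Finset.sum_eq_zero
    intro a _
    rw [← Finset.sum_mul]
    have hcol : ∑ w, Γ w a = 0 := by
      obtain ⟨u, v, huv, hu, hv, h0⟩ := hΓ a
      have hsub : ∑ w, Γ w a = ∑ w ∈ ({u, v} : Finset V), Γ w a := by
        symm
        apply Finset.sum_subset (Finset.subset_univ _)
        intro w _ hw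
        simp only [Finset.mem_insert, Finset.mem_singleton] at hw
        push_neg at hw
        exact h0 w hw.1 hw.2
      rw [hsub, Finset.sum_pair huv, hu, hv]
      ring
    rw [hcol, zero_mul]
  have hpair : g₁ s + g₁ t = 0 := by
    have h' : ∑ v, g₁ v = ∑ v ∈ ({s, t} : Finset V), g₁ v := by
      symm
      apply Finset.sum_subset (Finset.subset_univ _)
      intro w _ hw
      simp only [Finset.mem_insert, Finset.mem_singleton] at hw
      push_neg at hw
      exact hboth w hw.1 hw.2
    rw [h', Finset.sum_pair hst] at hsum
    exact hsum
  have h₁ : g₁ = (g₁ s) • b := by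
    funext v
    rw [Pi.smul_apply, smul_eq_mul]
    by_cases hvs : v = s
    · rw [hvs, hbs, mul_one]
    by_cases hvt : v = t
    · rw [hvt, hbt]
      linarith
    · rw [hb v hvs hvt, hboth v hvs hvt, mul_zero]
  refine ⟨h₁, ?_⟩
  funext v
  have h2 := hadd v
  have h3 := congrFun h₁ v
  rw [Pi.smul_apply, smul_eq_mul] at h3
  show g₂ v = (1 - g₁ s) * b v
  linarith [mul_one_sub (g₁ s) (b v)]

end AuxDecomp

section AuxMulVec

private lemma mulVec_smul' {V A : Type*} [Fintype A] (Γ : Matrix V A ℝ) (c : ℝ) (f : A → ℝ) :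
    Γ.mulVec (fun a => c * f a) = c • Γ.mulVec f := by
  funext w
  show ∑ a, Γ w a * (c * f a) = c * ∑ a, Γ w a * f a
  rw [Finset.mul_sum]
  exact Finset.sum_congr rfl fun a _ => by ring

private lemma mulVec_comb {V A : Type*} [Fintype A] (Γ : Matrix V A ℝ) (lam mu : ℝ)
    (f₁ f₂ : A → ℝ) :
    Γ.mulVec (fun a => lam * f₁ a + mu * f₂ a) = lam • Γ.mulVec f₁ + mu • Γ.mulVec f₂ := by
  funext w
  show ∑ a, Γ w a * (lam * f₁ a + mu * f₂ a)
    = lam * (∑ a, Γ w a * f₁ a) + mu * ∑ a, Γ w a * f₂ a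
  rw [Finset.mul_sum, Finset.mul_sum, ← Finset.sum_add_distrib]
  exact Finset.sum_congr rfl fun a _ => by ring

end AuxMulVec

theorem effRes_parallel_composition
    {V A : Type*} [Fintype V] [Fintype A] [Nonempty V] [Nonempty A]
    (r : ℝ) (hr : 1 ≤ r) (Γ : Matrix V A ℝ) (s t : V) (hst : s ≠ t)
    (b : V → ℝ) (hbs : b s = 1) (hbt : b t = -1)
    (hb : ∀ v, v ≠ s → v ≠ t → b v = 0)
    (hΓ : ∀ a : A, ∃ u v : V, u ≠ v ∧ Γ u a = 1 ∧ Γ v a = -1 ∧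
      ∀ w, w ≠ u → w ≠ v → Γ w a = 0)
    (V₁ V₂ : Set V) (A₁ : Set A)
    (hV : V₁ ∩ V₂ = {s, t})
    (hsV₁ : s ∈ V₁) (htV₁ : t ∈ V₁)
    (hA₁ : ∀ a ∈ A₁, ∀ w : V, Γ w a ≠ 0 → w ∈ V₁)
    (hA₂ : ∀ a ∉ A₁, ∀ w : V, Γ w a ≠ 0 → w ∈ V₂)
    (y : A → ℝ) (hy : ∀ a, 0 ≤ y a) :
    (effRes r Γ b y)⁻¹ ^ (1 / r) =
      (⨅ (f : A → ℝ) (_ : (∀ a ∉ A₁, f a = 0) ∧ Γ.mulVec f = b),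
        ∑ a, ENNReal.ofReal (|f a| ^ (r + 1)) / ENNReal.ofReal ((y a) ^ r))⁻¹
          ^ (1 / r) +
      (⨅ (f : A → ℝ) (_ : (∀ a ∈ A₁, f a = 0) ∧ Γ.mulVec f = b),
        ∑ a, ENNReal.ofReal (|f a| ^ (r + 1)) / ENNReal.ofReal ((y a) ^ r))⁻¹
          ^ (1 / r) := by
  classical
  have hr0 : 0 < r := lt_of_lt_of_le one_pos hr
  have h1r : 0 < 1/r := by positivity
  set R₁ := ⨅ (f : A → ℝ) (_ : (∀ a ∉ A₁, f a = 0) ∧ Γ.mulVec f = b),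
      ∑ a, ENNReal.ofReal (|f a| ^ (r + 1)) / ENNReal.ofReal ((y a) ^ r) with hR₁
  set R₂ := ⨅ (f : A → ℝ) (_ : (∀ a ∈ A₁, f a = 0) ∧ Γ.mulVec f = b),
      ∑ a, ENNReal.ofReal (|f a| ^ (r + 1)) / ENNReal.ofReal ((y a) ^ r) with hR₂
  set R := effRes r Γ b y with hR
  have hub : ∀ f : A → ℝ, Γ.mulVec f = b →
      R ≤ ∑ a, ENNReal.ofReal (|f a| ^ (r + 1)) / ENNReal.ofReal ((y a) ^ r) := by
    intro f hf
    rw [hR]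
    simp only [effRes]
    exact iInf₂_le f hf
  have hub₁ : ∀ f : A → ℝ, (∀ a ∉ A₁, f a = 0) → Γ.mulVec f = b →
      R₁ ≤ ∑ a, ENNReal.ofReal (|f a| ^ (r + 1)) / ENNReal.ofReal ((y a) ^ r) := by
    intro f h1 h2
    rw [hR₁]
    exact iInf₂_le f ⟨h1, h2⟩
  have hub₂ : ∀ f : A → ℝ, (∀ a ∈ A₁, f a = 0) → Γ.mulVec f = b →
      R₂ ≤ ∑ a, ENNReal.ofReal (|f a| ^ (r + 1)) / ENNReal.ofReal ((y a) ^ r) := by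
    intro f h1 h2
    rw [hR₂]
    exact iInf₂_le f ⟨h1, h2⟩
  have hle1 : R ≤ R₁ := by
    rw [hR, hR₁]
    simp only [effRes]
    exact le_iInf₂ fun f hf => iInf₂_le f hf.2
  have hle2 : R ≤ R₂ := by
    rw [hR, hR₂]
    simp only [effRes]
    exact le_iInf₂ fun f hf => iInf₂_le f hf.2
  have partA : R⁻¹ ^ (1/r) ≤ R₁⁻¹ ^ (1/r) + R₂⁻¹ ^ (1/r) := by
    apply aux_le_of_rpow hr0
    rw [hR]
    simp only [effRes]
    refine le_iInf₂ fun f hf => ?_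
    apply aux_rpow_inv_le hr0
    obtain ⟨hd1, hd2⟩ := aux_decomp Γ s t hst b hbs hbt hb hΓ V₁ V₂ A₁ hV hA₁ hA₂ f hf
    set lam := Γ.mulVec (A₁.indicator f) s with hlamdef
    have hsplit : ∑ a, ENNReal.ofReal (|f a| ^ (r + 1)) / ENNReal.ofReal ((y a) ^ r)
        = (∑ a, ENNReal.ofReal (|A₁.indicator f a| ^ (r + 1)) / ENNReal.ofReal ((y a) ^ r))
          + ∑ a, ENNReal.ofReal (|A₁ᶜ.indicator f a| ^ (r + 1)) / ENNReal.ofReal ((y a) ^ r) := by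
      conv_lhs => rw [← Set.indicator_self_add_compl A₁ f]
      exact En_split (by positivity) y _ _ (fun a => by
        by_cases h : a ∈ A₁
        · exact Or.inr (Set.indicator_of_notMem (by simpa using h) f)
        · exact Or.inl (Set.indicator_of_notMem h f))
    rw [hsplit]
    apply aux_splitineq hr y (A₁.indicator f) (A₁ᶜ.indicator f) lam (1 - lam) (by ring) R₁ R₂
    · intro hl0
      apply hub₂
      · intro a ha
        exact Set.indicator_of_notMem (by simpa using ha) f
      · rw [hd2, hl0, sub_zero, one_smul]
    · intro hm0
      apply hub₁
      · intro a ha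
        exact Set.indicator_of_notMem ha f
      · rw [hd1, show lam = (1:ℝ) by linarith, one_smul]
    · intro hl0
      apply hub₁ (fun a => lam⁻¹ * A₁.indicator f a)
      · intro a ha
        rw [Set.indicator_of_notMem ha, mul_zero]
      · rw [mulVec_smul' Γ lam⁻¹ (A₁.indicator f), hd1, smul_smul,
          inv_mul_cancel₀ hl0, one_smul]
    · intro hm0
      apply hub₂ (fun a => (1 - lam)⁻¹ * A₁ᶜ.indicator f a)
      · intro a ha
        rw [Set.indicator_of_notMem (by simpa using ha), mul_zero]
      · rw [mulVec_smul' Γ (1 - lam)⁻¹ (A₁ᶜ.indicator f), hd2, smul_smul,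
          inv_mul_cancel₀ hm0, one_smul]
  have partB : R₁⁻¹ ^ (1/r) + R₂⁻¹ ^ (1/r) ≤ R⁻¹ ^ (1/r) := by
    by_cases h1 : R₁ = ⊤
    · rw [h1, ENNReal.inv_top, ENNReal.zero_rpow_of_pos h1r, zero_add]
      exact aux_inv_rpow_mono hr0 hle2
    by_cases h2 : R₂ = ⊤
    · rw [h2, ENNReal.inv_top, ENNReal.zero_rpow_of_pos h1r, add_zero]
      exact aux_inv_rpow_mono hr0 hle1
    have hne1 : ∃ f : A → ℝ, (∀ a ∉ A₁, f a = 0) ∧ Γ.mulVec f = b := by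
      by_contra h
      rw [not_exists] at h
      apply h1
      rw [hR₁, iInf_eq_top]
      exact fun f => iInf_neg (h f)
    have hne2 : ∃ f : A → ℝ, (∀ a ∈ A₁, f a = 0) ∧ Γ.mulVec f = b := by
      by_contra h
      rw [not_exists] at h
      apply h2
      rw [hR₂, iInf_eq_top]
      exact fun f => iInf_neg (h f)
    haveI i1 : Nonempty {f : A → ℝ // (∀ a ∉ A₁, f a = 0) ∧ Γ.mulVec f = b} :=
      nonempty_subtype.mpr hne1
    haveI i2 : Nonempty {f : A → ℝ // (∀ a ∈ A₁, f a = 0) ∧ Γ.mulVec f = b} :=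
      nonempty_subtype.mpr hne2
    have repr1 : R₁⁻¹ ^ (1/r)
        = ⨆ g : {f : A → ℝ // (∀ a ∉ A₁, f a = 0) ∧ Γ.mulVec f = b},
          (∑ a, ENNReal.ofReal (|g.1 a| ^ (r + 1)) / ENNReal.ofReal ((y a) ^ r))⁻¹ ^ (1/r) := by
      rw [hR₁, iInf_subtype', ENNReal.inv_iInf]
      exact Monotone.map_iSup_of_continuousAt
        (ENNReal.continuous_rpow_const.continuousAt)
        (fun u v huv => ENNReal.rpow_le_rpow huv h1r.le)
        (by simpa using ENNReal.zero_rpow_of_pos h1r)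
    have repr2 : R₂⁻¹ ^ (1/r)
        = ⨆ g : {f : A → ℝ // (∀ a ∈ A₁, f a = 0) ∧ Γ.mulVec f = b},
          (∑ a, ENNReal.ofReal (|g.1 a| ^ (r + 1)) / ENNReal.ofReal ((y a) ^ r))⁻¹ ^ (1/r) := by
      rw [hR₂, iInf_subtype', ENNReal.inv_iInf]
      exact Monotone.map_iSup_of_continuousAt
        (ENNReal.continuous_rpow_const.continuousAt)
        (fun u v huv => ENNReal.rpow_le_rpow huv h1r.le)
        (by simpa using ENNReal.zero_rpow_of_pos h1r)
    rw [repr1, repr2]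
    refine ENNReal.iSup_add_iSup_le ?_
    rintro ⟨f₁, hf₁n, hf₁b⟩ ⟨f₂, hf₂n, hf₂b⟩
    refine aux_pair hr y f₁ f₂ (fun a => ?_) R (fun lam mu hl hm hs => ?_)
      (hub f₁ hf₁b) (hub f₂ hf₂b)
    · by_cases h : a ∈ A₁
      · exact Or.inr (hf₂n a h)
      · exact Or.inl (hf₁n a h)
    · apply hub
      rw [mulVec_comb, hf₁b, hf₂b, ← add_smul, hs, one_smul]
  exact le_antisymm partA partB
end

section
/- Let r ≥ 1 and a b : ℝ with a > 0 and b > 0. Then the infimum over all t : ℝ of |t| ^ (r+1) * a + |1 - t| ^ (r+1) * b equals a * b / (a ^ (1/r) + b ^ (1/r)) ^ r (real rpow), and this infimum is attained at t = b ^ (1/r) / (a ^ (1/r) + b ^ (1/r)). (One-dimensional optimization underlying the parallel composition rule of Lemma 8: splitting one unit of flow between two branches of resistances a and b optimally yields total resistance a·b/(a^{1/r}+b^{1/r})^r.) -/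
open Real

private lemma tangent_rpow {p : ℝ} (hp : 1 ≤ p) {c x : ℝ} (hc : 0 < c) (hx : 0 ≤ x) :
    c ^ p + p * c ^ (p - 1) * (x - c) ≤ x ^ p := by
  have hz : -1 ≤ x / c - 1 := by
    have : 0 ≤ x / c := div_nonneg hx hc.le
    linarith
  have hB := one_add_mul_self_le_rpow_one_add hz hp
  have h1 : (1 + (x / c - 1)) = x / c := by ring
  rw [h1] at hB
  have h2 : (x / c) ^ p = x ^ p / c ^ p := Real.div_rpow hx hc.le p
  have hcp : (0:ℝ) < c ^ p := Real.rpow_pos_of_pos hc p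
  have hmul := mul_le_mul_of_nonneg_left hB hcp.le
  have hcc : c ^ (p - 1) * c = c ^ p := by
    rw [← Real.rpow_add_one hc.ne' (p - 1)]
    ring_nf
  have h3 : c ^ p * (x / c) = c ^ (p - 1) * x := by
    rw [mul_comm, div_mul_eq_mul_div, ← hcc]
    field_simp
  calc c ^ p + p * c ^ (p - 1) * (x - c)
      = c ^ p * (1 + p * (x / c - 1)) := by
        linear_combination (-p) * hcc - p * h3
    _ ≤ c ^ p * (x / c) ^ p := hmul
    _ = x ^ p := by rw [h2, mul_div_cancel₀ _ hcp.ne']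

private lemma key_split (r a b s u : ℝ) (hr : 1 ≤ r) (ha : 0 < a) (hb : 0 < b)
    (hs : 0 < s) (hu : 0 < u) (hsr : s ^ r = a) (hur : u ^ r = b) :
    (⨅ t : ℝ, |t| ^ (r + 1) * a + |1 - t| ^ (r + 1) * b) = a * b / (s + u) ^ r ∧
    |u / (s + u)| ^ (r + 1) * a + |1 - u / (s + u)| ^ (r + 1) * b
      = a * b / (s + u) ^ r := by
  have hS : 0 < s + u := by linarith
  have ht₀ : 0 < u / (s + u) := div_pos hu hS
  have hs₀ : 1 - u / (s + u) = s / (s + u) := by field_simp; ring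
  have hs₀pos : 0 < s / (s + u) := div_pos hs hS
  have hSr : 0 < (s + u) ^ r := Real.rpow_pos_of_pos hS r
  have hV : 0 < a * b / (s + u) ^ r := div_pos (mul_pos ha hb) hSr
  have ht₀r : (u / (s + u)) ^ r * a = a * b / (s + u) ^ r := by
    rw [Real.div_rpow hu.le hS.le, hur]
    field_simp
  have hs₀r : (s / (s + u)) ^ r * b = a * b / (s + u) ^ r := by
    rw [Real.div_rpow hs.le hS.le, hsr]
    field_simp
  have ht₀p : (u / (s + u)) ^ (r + 1) * a = a * b / (s + u) ^ r * (u / (s + u)) := by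
    rw [Real.rpow_add_one ht₀.ne']
    calc (u / (s + u)) ^ r * (u / (s + u)) * a
        = (u / (s + u)) ^ r * a * (u / (s + u)) := by ring
      _ = a * b / (s + u) ^ r * (u / (s + u)) := by rw [ht₀r]
  have hs₀p : (s / (s + u)) ^ (r + 1) * b = a * b / (s + u) ^ r * (s / (s + u)) := by
    rw [Real.rpow_add_one hs₀pos.ne']
    calc (s / (s + u)) ^ r * (s / (s + u)) * b
        = (s / (s + u)) ^ r * b * (s / (s + u)) := by ring
      _ = a * b / (s + u) ^ r * (s / (s + u)) := by rw [hs₀r]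
  have hsum : u / (s + u) + s / (s + u) = 1 := by
    field_simp
    ring
  have hval : |u / (s + u)| ^ (r + 1) * a + |1 - u / (s + u)| ^ (r + 1) * b
      = a * b / (s + u) ^ r := by
    rw [abs_of_pos ht₀, hs₀, abs_of_pos hs₀pos, ht₀p, hs₀p, ← mul_add, hsum, mul_one]
  have hlb : ∀ t : ℝ, a * b / (s + u) ^ r ≤ |t| ^ (r + 1) * a + |1 - t| ^ (r + 1) * b := by
    intro t
    have hx : (0:ℝ) ≤ |t| := abs_nonneg t
    have hy : (0:ℝ) ≤ |1 - t| := abs_nonneg _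
    have hxy : (1:ℝ) ≤ |t| + |1 - t| := by
      have h := abs_add_le t (1 - t)
      simp only [add_sub_cancel] at h
      simpa using h
    have hp : 1 ≤ r + 1 := by linarith
    have h1 := tangent_rpow hp ht₀ hx
    have h2 := tangent_rpow hp hs₀pos hy
    have h1' := mul_le_mul_of_nonneg_right h1 ha.le
    have h2' := mul_le_mul_of_nonneg_right h2 hb.le
    have hp1 : (r + 1) - 1 = r := by ring
    rw [hp1] at h1' h2'
    have e1 : ((u / (s + u)) ^ (r + 1) + (r + 1) * (u / (s + u)) ^ r * (|t| - u / (s + u))) * a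
        = a * b / (s + u) ^ r * (u / (s + u))
          + (r + 1) * (a * b / (s + u) ^ r) * (|t| - u / (s + u)) := by
      linear_combination ht₀p + (r + 1) * (|t| - u / (s + u)) * ht₀r
    have e2 : ((s / (s + u)) ^ (r + 1)
          + (r + 1) * (s / (s + u)) ^ r * (|1 - t| - s / (s + u))) * b
        = a * b / (s + u) ^ r * (s / (s + u))
          + (r + 1) * (a * b / (s + u) ^ r) * (|1 - t| - s / (s + u)) := by
      linear_combination hs₀p + (r + 1) * (|1 - t| - s / (s + u)) * hs₀r
    rw [e1] at h1'
    rw [e2] at h2'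
    have hlin : 0 ≤ (r + 1) * (a * b / (s + u) ^ r) * (|t| + |1 - t| - 1) := by
      apply mul_nonneg (mul_nonneg (by linarith) hV.le)
      linarith
    have hc1 : (r + 1) * (a * b / (s + u) ^ r) * (|t| - u / (s + u))
          + (r + 1) * (a * b / (s + u) ^ r) * (|1 - t| - s / (s + u))
        = (r + 1) * (a * b / (s + u) ^ r) * (|t| + |1 - t| - 1) := by
      linear_combination (-(r + 1) * (a * b / (s + u) ^ r)) * hsum
    have hc2 : a * b / (s + u) ^ r * (u / (s + u)) + a * b / (s + u) ^ r * (s / (s + u))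
        = a * b / (s + u) ^ r := by
      linear_combination (a * b / (s + u) ^ r) * hsum
    linarith [h1', h2', hlin, hc1, hc2]
  have hbdd : BddBelow (Set.range fun t : ℝ => |t| ^ (r + 1) * a + |1 - t| ^ (r + 1) * b) := by
    refine ⟨a * b / (s + u) ^ r, ?_⟩
    rintro x ⟨t, rfl⟩
    exact hlb t
  refine ⟨le_antisymm ?_ (le_ciInf hlb), hval⟩
  calc (⨅ t : ℝ, |t| ^ (r + 1) * a + |1 - t| ^ (r + 1) * b)
      ≤ |u / (s + u)| ^ (r + 1) * a + |1 - u / (s + u)| ^ (r + 1) * b :=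
        ciInf_le hbdd (u / (s + u))
    _ = a * b / (s + u) ^ r := hval

theorem parallel_split_infimum (r : ℝ) (hr : 1 ≤ r)
    (a b : ℝ) (ha : 0 < a) (hb : 0 < b) :
    (⨅ t : ℝ, |t| ^ (r + 1) * a + |1 - t| ^ (r + 1) * b) =
      a * b / (a ^ (1 / r) + b ^ (1 / r)) ^ r ∧
    |b ^ (1 / r) / (a ^ (1 / r) + b ^ (1 / r))| ^ (r + 1) * a +
      |1 - b ^ (1 / r) / (a ^ (1 / r) + b ^ (1 / r))| ^ (r + 1) * b =
      a * b / (a ^ (1 / r) + b ^ (1 / r)) ^ r := by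
  have hr0 : (0:ℝ) < r := lt_of_lt_of_le one_pos hr
  exact key_split r a b (a ^ (1 / r)) (b ^ (1 / r)) hr ha hb
    (Real.rpow_pos_of_pos ha _) (Real.rpow_pos_of_pos hb _)
    (by rw [← Real.rpow_mul ha.le, one_div_mul_cancel hr0.ne', Real.rpow_one])
    (by rw [← Real.rpow_mul hb.le, one_div_mul_cancel hr0.ne', Real.rpow_one])
end

section
/- For every real r ≥ 1 and all natural numbers m n with 2 ≤ m and 2 ≤ n, one has ((m : ℝ) / (m - 1)) ^ r ≥ 1 + 1 / ((m : ℝ) - 1) ^ r and 1 + 1 / ((m : ℝ) - 1) ^ r > 1 + ((n : ℝ) - 1) / ((n : ℝ) ^ r * (m : ℝ) ^ r) (real rpow). (Key inequality in the proof of Theorem 11 (APX-hardness): a cut of total conductance at most (m−1)/m forces an effective resistance exceeding the budget B = 1 + (n−1)/(n^r m^r).) -/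
open Real

lemma aux_one_add_rpow {x r : ℝ} (hx : 0 ≤ x) (hr : 1 ≤ r) :
    1 + x ^ r ≤ (1 + x) ^ r := by
  lift x to NNReal using hx
  have h := NNReal.coe_le_coe.mpr (NNReal.add_rpow_le_rpow_add 1 x hr)
  push_cast [NNReal.coe_rpow] at h
  simpa [Real.one_rpow] using h

theorem cut_inequality_chain (r : ℝ) (hr : 1 ≤ r)
    (m n : ℕ) (hm : 2 ≤ m) (hn : 2 ≤ n) :
    ((m : ℝ) / ((m : ℝ) - 1)) ^ r ≥ 1 + 1 / ((m : ℝ) - 1) ^ r ∧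
    1 + 1 / ((m : ℝ) - 1) ^ r >
      1 + ((n : ℝ) - 1) / ((n : ℝ) ^ r * (m : ℝ) ^ r) := by
  have hm2 : (2:ℝ) ≤ (m:ℝ) := by exact_mod_cast hm
  have hn2 : (2:ℝ) ≤ (n:ℝ) := by exact_mod_cast hn
  have hm1 : (1:ℝ) ≤ (m:ℝ) - 1 := by linarith
  have hm0 : (0:ℝ) < (m:ℝ) - 1 := by linarith
  constructor
  · have h := aux_one_add_rpow (x := 1 / ((m:ℝ) - 1)) (by positivity) hr
    have hfrac : (m : ℝ) / ((m : ℝ) - 1) = 1 + 1 / ((m:ℝ) - 1) := by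
      field_simp
      ring
    rw [hfrac]
    calc 1 + 1 / ((m : ℝ) - 1) ^ r
        = 1 + (1 / ((m:ℝ) - 1)) ^ r := by
          rw [Real.div_rpow zero_le_one hm0.le, Real.one_rpow]
      _ ≤ (1 + 1 / ((m:ℝ)-1)) ^ r := h
  · have key : ((n:ℝ) - 1) * ((m:ℝ) - 1) ^ r < (n:ℝ) ^ r * (m:ℝ) ^ r := by
      have h1 : ((m:ℝ) - 1) ^ r ≤ (m:ℝ) ^ r :=
        Real.rpow_le_rpow hm0.le (by linarith) (by linarith)
      have h2 : (n:ℝ) - 1 < (n:ℝ) ^ r := by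
        have : (n:ℝ) = (n:ℝ) ^ (1:ℝ) := (Real.rpow_one _).symm
        have hle : (n:ℝ) ^ (1:ℝ) ≤ (n:ℝ) ^ r :=
          Real.rpow_le_rpow_of_exponent_le (by linarith) hr
        rw [Real.rpow_one] at hle
        linarith
      have hpos : (0:ℝ) < ((m:ℝ) - 1) ^ r := Real.rpow_pos_of_pos hm0 r
      calc ((n:ℝ) - 1) * ((m:ℝ) - 1) ^ r < (n:ℝ) ^ r * ((m:ℝ) - 1) ^ r := by
            apply mul_lt_mul_of_pos_right h2 hpos
        _ ≤ (n:ℝ) ^ r * (m:ℝ) ^ r := by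
            apply mul_le_mul_of_nonneg_left h1 (Real.rpow_pos_of_pos (by linarith) r).le
    have hd : (0:ℝ) < (n:ℝ) ^ r * (m:ℝ) ^ r := by
      have := Real.rpow_pos_of_pos (show (0:ℝ) < n by linarith) r
      have := Real.rpow_pos_of_pos (show (0:ℝ) < m by linarith) r
      positivity
    have hpos : (0:ℝ) < ((m:ℝ) - 1) ^ r := Real.rpow_pos_of_pos hm0 r
    have : ((n:ℝ) - 1) / ((n:ℝ) ^ r * (m:ℝ) ^ r) < 1 / ((m:ℝ) - 1) ^ r := by
      rw [div_lt_div_iff₀ hd hpos]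
      linarith [key]
    linarith
end

section
/- Assume Γ is a node–arc incidence matrix. Let y : A → ℝ with y a ≥ 0 for all a, let B > 0 be real with R y ≤ ENNReal.ofReal B, and let S : Set V with s ∈ S and t ∉ S. Then ∑ a in {a | ∑ v in S, Γ v a ≠ 0}, y a ≥ B ^ (-(1/r)) (real rpow), where {a | ∑ v in S, Γ v a ≠ 0} is the set of arcs with exactly one endpoint in S. (Cut condition used in the proof of Theorem 11: in any network whose effective resistance between s and t is at most B, every s–t cut has total conductance at least 1/B^{1/r}.) -/
open scoped ENNReal Classical

theorem cut_condition
    {V A : Type*} [Fintype V] [Fintype A] [Nonempty V] [Nonempty A]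
    (r : ℝ) (hr : 1 ≤ r) (Γ : Matrix V A ℝ) (s t : V) (hst : s ≠ t)
    (b : V → ℝ) (hbs : b s = 1) (hbt : b t = -1)
    (hb : ∀ v, v ≠ s → v ≠ t → b v = 0)
    (hΓ : ∀ a : A, ∃ u v : V, u ≠ v ∧ Γ u a = 1 ∧ Γ v a = -1 ∧
      ∀ w, w ≠ u → w ≠ v → Γ w a = 0)
    (y : A → ℝ) (hy : ∀ a, 0 ≤ y a)
    (B : ℝ) (hB : 0 < B) (hres : effRes r Γ b y ≤ ENNReal.ofReal B)
    (S : Set V) (hsS : s ∈ S) (htS : t ∉ S) :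
    ∑ a ∈ Finset.univ.filter (fun a => (∑ v ∈ S.toFinset, Γ v a) ≠ 0), y a ≥
      B ^ (-(1 / r)) := by
  classical
  set c : A → ℝ := fun a => ∑ v ∈ S.toFinset, Γ v a with hc
  set cut : Finset A := Finset.univ.filter (fun a => c a ≠ 0) with hcut
  set Y : ℝ := ∑ a ∈ cut, y a with hYdef
  have hr0 : (0:ℝ) < r := lt_of_lt_of_le one_pos hr
  have hr1 : (0:ℝ) < r + 1 := by linarith
  have hYnn : 0 ≤ Y := Finset.sum_nonneg fun a _ => hy a
  -- |c a| ≤ 1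
  have hcabs : ∀ a, |c a| ≤ 1 := by
    intro a
    obtain ⟨u, v, huv, hu, hv, hw⟩ := hΓ a
    have hrow : ∀ w, Γ w a = (if w = u then (1:ℝ) else 0) + (if w = v then (-1:ℝ) else 0) := by
      intro w
      by_cases h1 : w = u
      · subst h1; simp [hu, huv]
      · by_cases h2 : w = v
        · subst h2; simp [hv, h1]
        · simp [h1, h2, hw w h1 h2]
    have hceq : c a = (if u ∈ S.toFinset then (1:ℝ) else 0)
        + (if v ∈ S.toFinset then (-1:ℝ) else 0) := by
      rw [hc]
      simp only [hrow]
      rw [Finset.sum_add_distrib,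
        Finset.sum_ite_eq' S.toFinset u (fun _ => (1:ℝ)),
        Finset.sum_ite_eq' S.toFinset v (fun _ => (-1:ℝ))]
    rw [hceq]
    split_ifs <;> norm_num
  have key : ∀ ε : ℝ, 0 < ε → 0 < Y ∧ Y ^ (-r) ≤ B + ε := by
    intro ε hε
    have h1 : effRes r Γ b y < ENNReal.ofReal (B + ε) := by
      refine lt_of_le_of_lt hres ?_
      rw [ENNReal.ofReal_lt_ofReal_iff (by linarith)]
      linarith
    rw [effRes, iInf_lt_iff] at h1
    obtain ⟨f, h1⟩ := h1
    rw [iInf_lt_iff] at h1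
    obtain ⟨hf, h1⟩ := h1
    have hterm : ∀ a : A,
        ENNReal.ofReal (|f a| ^ (r+1)) / ENNReal.ofReal ((y a) ^ r) < ⊤ := by
      intro a
      exact ENNReal.sum_lt_top.mp (lt_of_lt_of_le h1 le_top) a (Finset.mem_univ a)
    have hfz : ∀ a, y a = 0 → f a = 0 := by
      intro a ha0
      by_contra hfa
      have h2 : ENNReal.ofReal (|f a| ^ (r+1)) ≠ 0 := by
        rw [Ne, ENNReal.ofReal_eq_zero, not_le]
        exact Real.rpow_pos_of_pos (abs_pos.mpr hfa) _
      have h3 : ENNReal.ofReal (|f a| ^ (r+1)) / ENNReal.ofReal ((y a)^r) = ⊤ := by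
        rw [ha0, Real.zero_rpow (ne_of_gt hr0), ENNReal.ofReal_zero, ENNReal.div_zero h2]
      exact (hterm a).ne h3
    -- real energy on the cut
    set E : ℝ := ∑ a ∈ cut, |f a| ^ (r+1) / (y a) ^ r with hE
    have hEnn : 0 ≤ E := Finset.sum_nonneg fun a _ =>
      div_nonneg (Real.rpow_nonneg (abs_nonneg _) _) (Real.rpow_nonneg (hy a) _)
    have hE_le : E ≤ B + ε := by
      have h3 : ENNReal.ofReal E ≤ ENNReal.ofReal (B + ε) := by
        rw [hE, ENNReal.ofReal_sum_of_nonneg (fun a _ =>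
          div_nonneg (Real.rpow_nonneg (abs_nonneg _) _) (Real.rpow_nonneg (hy a) _))]
        calc ∑ a ∈ cut, ENNReal.ofReal (|f a| ^ (r+1) / (y a)^r)
            ≤ ∑ a ∈ cut, ENNReal.ofReal (|f a| ^ (r+1)) / ENNReal.ofReal ((y a)^r) := by
              apply Finset.sum_le_sum; intro a _
              by_cases hya : y a = 0
              · rw [hfz a hya]
                simp [Real.zero_rpow (ne_of_gt hr1)]
              · rw [ENNReal.ofReal_div_of_pos
                  (Real.rpow_pos_of_pos ((hy a).lt_of_ne (Ne.symm hya)) r)]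
          _ ≤ ∑ a, ENNReal.ofReal (|f a| ^ (r+1)) / ENNReal.ofReal ((y a)^r) :=
              Finset.sum_le_sum_of_subset (Finset.subset_univ _)
          _ ≤ ENNReal.ofReal (B+ε) := h1.le
      rwa [ENNReal.ofReal_le_ofReal_iff (by linarith)] at h3
    -- flow across the cut
    have hflow : ∑ a ∈ cut, c a * f a = 1 := by
      have h4 : ∑ a, c a * f a = ∑ v ∈ S.toFinset, b v := by
        calc ∑ a, c a * f a
            = ∑ a, ∑ v ∈ S.toFinset, Γ v a * f a := by
              simp only [hc, Finset.sum_mul]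
          _ = ∑ v ∈ S.toFinset, ∑ a, Γ v a * f a := Finset.sum_comm
          _ = ∑ v ∈ S.toFinset, (Γ.mulVec f) v := rfl
          _ = ∑ v ∈ S.toFinset, b v := by rw [hf]
      have h5 : ∑ v ∈ S.toFinset, b v = 1 := by
        have hbv : ∀ v ∈ S.toFinset, b v = if v = s then (1:ℝ) else 0 := by
          intro v hv
          by_cases h : v = s
          · simp [h, hbs]
          · rw [hb v h (by rintro rfl; exact htS (Set.mem_toFinset.mp hv))]; simp [h]
        rw [Finset.sum_congr rfl hbv, Finset.sum_ite_eq' S.toFinset s (fun _ => (1:ℝ))]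
        simp [Set.mem_toFinset.mpr hsS]
      have h6 : ∑ a ∈ cut, c a * f a = ∑ a, c a * f a := by
        rw [hcut]
        apply Finset.sum_filter_of_ne
        intro a _ hne hca
        exact hne (by rw [hca, zero_mul])
      rw [h6, h4, h5]
    have h1le : (1:ℝ) ≤ ∑ a ∈ cut, |f a| := by
      calc (1:ℝ) = ∑ a ∈ cut, c a * f a := hflow.symm
        _ ≤ |∑ a ∈ cut, c a * f a| := le_abs_self _
        _ ≤ ∑ a ∈ cut, |c a * f a| := Finset.abs_sum_le_sum_abs _ _
        _ ≤ ∑ a ∈ cut, |f a| := Finset.sum_le_sum fun a _ => by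
            rw [abs_mul]
            exact mul_le_of_le_one_left (abs_nonneg _) (hcabs a)
    -- Hölder
    set g : A → ℝ := fun a => if y a = 0 then 0 else |f a| / y a with hg
    have hgnn : ∀ a, 0 ≤ g a := by
      intro a; rw [hg]; dsimp only
      split_ifs with h
      · exact le_refl 0
      · exact div_nonneg (abs_nonneg _) (hy a)
    have hwg : ∀ a ∈ cut, y a * g a = |f a| := by
      intro a _
      rw [hg]; dsimp only
      split_ifs with h
      · simp [h, hfz a h]
      · field_simp
    have hwgp : ∀ a ∈ cut, y a * g a ^ (r+1) = |f a| ^ (r+1) / y a ^ r := by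
      intro a _
      rw [hg]; dsimp only
      split_ifs with h
      · simp [h, hfz a h, Real.zero_rpow (ne_of_gt hr1)]
      · have hpos : 0 < y a := (hy a).lt_of_ne (Ne.symm h)
        rw [Real.div_rpow (abs_nonneg _) (hy a), Real.rpow_add hpos, Real.rpow_one]
        have hyr : (0:ℝ) < y a ^ r := Real.rpow_pos_of_pos hpos r
        field_simp
    have hholder := Real.inner_le_weight_mul_Lp_of_nonneg cut
      (by linarith : (1:ℝ) ≤ r+1) y g hy hgnn
    rw [Finset.sum_congr rfl hwg, Finset.sum_congr rfl hwgp] at hholder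
    have h6 : (1:ℝ) ≤ Y ^ (1-(r+1)⁻¹) * E ^ ((r+1)⁻¹) := le_trans h1le hholder
    have hexp_pos : (0:ℝ) < 1 - (r+1)⁻¹ := by
      rw [sub_pos]
      rw [inv_lt_one_iff₀]
      right; linarith
    have hYpos : 0 < Y := by
      rcases hYnn.lt_or_eq with h | h
      · exact h
      · exfalso
        rw [← h, Real.zero_rpow (ne_of_gt hexp_pos), zero_mul] at h6
        linarith
    refine ⟨hYpos, ?_⟩
    have hE' : E ^ ((r+1)⁻¹) ≤ (B+ε) ^ ((r+1)⁻¹) :=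
      Real.rpow_le_rpow hEnn hE_le (by positivity)
    have h8 : (1:ℝ) ≤ Y ^ (1-(r+1)⁻¹) * (B+ε) ^ ((r+1)⁻¹) := by
      refine le_trans h6 ?_
      exact mul_le_mul_of_nonneg_left hE' (Real.rpow_nonneg hYnn _)
    have h9 := Real.rpow_le_rpow (by norm_num) h8 hr1.le
    rw [Real.one_rpow,
      Real.mul_rpow (Real.rpow_nonneg hYnn _) (Real.rpow_nonneg (by linarith) _),
      ← Real.rpow_mul hYnn, ← Real.rpow_mul (by linarith : (0:ℝ) ≤ B + ε)] at h9
    have he1 : (1-(r+1)⁻¹)*(r+1) = r := by field_simp; ring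
    have he2 : (r+1)⁻¹*(r+1) = 1 := by field_simp
    rw [he1, he2, Real.rpow_one] at h9
    -- h9 : 1 ≤ Y^r * (B+ε)
    have hYr : (0:ℝ) < Y ^ r := Real.rpow_pos_of_pos hYpos r
    rw [Real.rpow_neg hYnn, inv_le_iff_one_le_mul₀ hYr]
    linarith [h9]
  obtain ⟨hYpos, -⟩ := key 1 one_pos
  have hYrB : Y ^ (-r) ≤ B := by
    by_contra h
    push_neg at h
    have := (key ((Y ^ (-r) - B)/2) (by linarith)).2
    linarith
  have hYrpos : (0:ℝ) < Y ^ (-r) := Real.rpow_pos_of_pos hYpos _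
  have h10 : B ^ (-(1/r)) ≤ (Y ^ (-r)) ^ (-(1/r)) :=
    Real.rpow_le_rpow_of_nonpos hYrpos hYrB (by rw [neg_nonpos]; positivity)
  rw [← Real.rpow_mul hYnn] at h10
  have : (-r) * -(1/r) = 1 := by field_simp
  rw [this, Real.rpow_one] at h10
  exact h10
end
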